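/- arXiv:2107.02837 — 4 statements merged into one kernel-verified Lean document; each statement's English description precedes it below -/
import Mathlib

section
/- Let M be a reduced Q_0-local A(1)-module with M_k = 0 for all k < 0, and let x be any nonzero element of M_0. Then (i) Sq^2 Sq^1 Sq^2 x ≠ 0, and (ii) Sq^1 Sq^2 Sq^1 Sq^2 x = Sq^2 Sq^1 Sq^2 Sq^1 x = 0. -/
/-- A graded module over the subalgebra `A(1)` of the mod 2 Steenrod algebra:
an internally `ℤ`-graded `𝔽₂`-vector space equipped with operations `Sq¹` (degree `1`)
and `Sq²` (degree `2`) satisfying `Sq¹Sq¹ = 0` and `Sq²Sq² = Sq¹Sq²Sq¹`. -/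
structure A1Module where
  carrier : Type
  [acg : AddCommGroup carrier]
  [mod : Module (ZMod 2) carrier]
  gr : ℤ → Submodule (ZMod 2) carrier
  indep : iSupIndep gr
  total : ⨆ k : ℤ, gr k = ⊤
  sq1 : carrier →ₗ[ZMod 2] carrier
  sq2 : carrier →ₗ[ZMod 2] carrier
  sq1_gr : ∀ k : ℤ, ∀ x ∈ gr k, sq1 x ∈ gr (k + 1)
  sq2_gr : ∀ k : ℤ, ∀ x ∈ gr k, sq2 x ∈ gr (k + 2)
  sq1_sq1 : ∀ x, sq1 (sq1 x) = 0
  sq2_sq2 : ∀ x, sq2 (sq2 x) = sq1 (sq2 (sq1 x))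

attribute [instance] A1Module.acg A1Module.mod

namespace A1Module

variable (M : A1Module)

/-- The Milnor primitive `Q₁ = Sq¹Sq² + Sq²Sq¹`. -/
def Q1 : M.carrier →ₗ[ZMod 2] M.carrier := M.sq1 ∘ₗ M.sq2 + M.sq2 ∘ₗ M.sq1

/-- `M` is bounded below: `M_k = 0` for all `k` below some bound. -/
def BoundedBelow : Prop := ∃ n : ℤ, ∀ k : ℤ, k < n → M.gr k = ⊥

/-- `M` is of finite type: each graded piece is a finite-dimensional `𝔽₂`-vector space. -/
def FiniteType : Prop := ∀ k : ℤ, FiniteDimensional (ZMod 2) ↥(M.gr k)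

/-- `M` is finite: finite type and only finitely many nonzero graded pieces. -/
def FiniteModule : Prop := M.FiniteType ∧ {k : ℤ | M.gr k ≠ ⊥}.Finite

/-- `M` is `Q₀`-local: the `Q₁`-Margolis homology vanishes in every degree,
i.e. every homogeneous `Q₁`-cycle is a `Q₁`-boundary. -/
def Q0Local : Prop :=
  ∀ k : ℤ, LinearMap.ker M.Q1 ⊓ M.gr k ≤ Submodule.map M.Q1 (M.gr (k - 3))

/-- `p` is a (graded) `A(1)`-submodule of `M`. -/
def IsA1Sub (p : Submodule (ZMod 2) M.carrier) : Prop :=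
  (∀ x ∈ p, M.sq1 x ∈ p) ∧ (∀ x ∈ p, M.sq2 x ∈ p) ∧ p = ⨆ k : ℤ, p ⊓ M.gr k

/-- `p` is a direct summand of `M` in the category of graded `A(1)`-modules. -/
def IsSummand (p : Submodule (ZMod 2) M.carrier) : Prop :=
  M.IsA1Sub p ∧ ∃ q, M.IsA1Sub q ∧ p ⊓ q = ⊥ ∧ p ⊔ q = ⊤

/-- The action of the eight monomial basis elements
`1, Sq¹, Sq², Sq¹Sq², Sq²Sq¹, Sq¹Sq²Sq¹, Sq²Sq¹Sq², Sq¹Sq²Sq¹Sq²` of `A(1)`. -/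
def w8 : Fin 8 → (M.carrier →ₗ[ZMod 2] M.carrier) :=
  ![LinearMap.id, M.sq1, M.sq2, M.sq1 ∘ₗ M.sq2, M.sq2 ∘ₗ M.sq1,
    M.sq1 ∘ₗ M.sq2 ∘ₗ M.sq1, M.sq2 ∘ₗ M.sq1 ∘ₗ M.sq2,
    M.sq1 ∘ₗ M.sq2 ∘ₗ M.sq1 ∘ₗ M.sq2]

/-- The action of the four monomials `1, Sq², Sq¹Sq², Sq²Sq¹Sq²`, which give an `𝔽₂`-basis of
`A(1)//A(0)` applied to a generator. -/
def w4 : Fin 4 → (M.carrier →ₗ[ZMod 2] M.carrier) :=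
  ![LinearMap.id, M.sq2, M.sq1 ∘ₗ M.sq2, M.sq2 ∘ₗ M.sq1 ∘ₗ M.sq2]

/-- `p` is a free `A(1)`-submodule of `M`: it has homogeneous elements `g i` such that the
elements `Sqᴿ (g i)`, for `Sqᴿ` running over the monomial basis of `A(1)`, form a basis of `p`.
This says exactly that `p ≅ ⊕ᵢ Σ^{d i} A(1)` as graded `A(1)`-modules. -/
def IsFreeOn (p : Submodule (ZMod 2) M.carrier) : Prop :=
  ∃ (I : Type) (d : I → ℤ) (g : I → M.carrier),
    (∀ i, g i ∈ M.gr (d i)) ∧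
    LinearIndependent (ZMod 2) (fun q : I × Fin 8 => M.w8 q.2 (g q.1)) ∧
    Submodule.span (ZMod 2) (Set.range fun q : I × Fin 8 => M.w8 q.2 (g q.1)) = p

/-- `M` is reduced: it has no nonzero free direct summand. -/
def Reduced : Prop := ∀ p, M.IsSummand p → M.IsFreeOn p → p = ⊥

/-- `p` is a flock of seagulls `⊕ᵢ Σ^{α i} Υ_{n i}` inside `M`:
there are chains of elements `y i 0, y i 1, …` (of length `n i`, possibly infinite), with
`y i j` homogeneous of degree `α i + 4j`, linked by `Sq¹ y_{i,j+1} = Sq²Sq¹Sq² y_{i,j}` and with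
`Sq¹ y_{i,0} = 0`, such that the elements `Sqᴿ y_{i,j}`, for `Sqᴿ ∈ {1, Sq², Sq¹Sq², Sq²Sq¹Sq²}`,
form an `𝔽₂`-basis of `p`.  This says exactly that `p ≅ ⊕ᵢ Σ^{α i} Υ_{n i}`
as graded `A(1)`-modules. -/
def FlockBasisOn (p : Submodule (ZMod 2) M.carrier) (I : Type) (α : I → ℤ) (n : I → ℕ∞) :
    Prop :=
  ∃ y : I → ℕ → M.carrier,
    (∀ (i : I) (j : ℕ), (j : ℕ∞) < n i → y i j ∈ M.gr (α i + 4 * (j : ℤ))) ∧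
    (∀ i : I, M.sq1 (y i 0) = 0) ∧
    (∀ (i : I) (j : ℕ), ((j + 1 : ℕ) : ℕ∞) < n i →
      M.sq1 (y i (j + 1)) = M.sq2 (M.sq1 (M.sq2 (y i j)))) ∧
    LinearIndependent (ZMod 2)
      (fun q : {x : I × ℕ // (x.2 : ℕ∞) < n x.1} × Fin 4 => M.w4 q.2 (y q.1.1.1 q.1.1.2)) ∧
    Submodule.span (ZMod 2)
      (Set.range fun q : {x : I × ℕ // (x.2 : ℕ∞) < n x.1} × Fin 4 =>
        M.w4 q.2 (y q.1.1.1 q.1.1.2)) = p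

/-- `M` is (isomorphic to) a flock of seagulls `⊕ᵢ Σ^{α i} Υ_{n i}`. -/
def IsFlock : Prop :=
  ∃ (I : Type) (α : I → ℤ) (n : I → ℕ∞), (∀ i, 1 ≤ n i) ∧ M.FlockBasisOn ⊤ I α n

/-- `M^k`: the smallest `A(1)`-submodule of `M` containing all homogeneous elements of
degree at most `k`. -/
def below (k : ℤ) : Submodule (ZMod 2) M.carrier :=
  sInf {p | (∀ x ∈ p, M.sq1 x ∈ p) ∧ (∀ x ∈ p, M.sq2 x ∈ p) ∧ ∀ j ≤ k, M.gr j ≤ p}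

/-- The `A(1)`-submodule of `M` generated by a set. -/
def a1span (s : Set M.carrier) : Submodule (ZMod 2) M.carrier :=
  sInf {p | (∀ x ∈ p, M.sq1 x ∈ p) ∧ (∀ x ∈ p, M.sq2 x ∈ p) ∧ s ⊆ p}

/-- `p` is a finite submodule: each graded piece is finite-dimensional and all but finitely
many graded pieces vanish. -/
def FiniteOn (p : Submodule (ZMod 2) M.carrier) : Prop :=
  (∀ k : ℤ, FiniteDimensional (ZMod 2) ↥(p ⊓ M.gr k)) ∧ {k : ℤ | p ⊓ M.gr k ≠ ⊥}.Finite

end A1Module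

/-- Isomorphism of graded `A(1)`-modules. -/
def A1Iso (M N : A1Module) : Prop :=
  ∃ e : M.carrier ≃ₗ[ZMod 2] N.carrier,
    (∀ x, e (M.sq1 x) = N.sq1 (e x)) ∧
    (∀ x, e (M.sq2 x) = N.sq2 (e x)) ∧
    ∀ k : ℤ, ∀ x ∈ M.gr k, e x ∈ N.gr k

section AuxiliaryLemmas

namespace A1Module

variable (M : A1Module)

lemma w_bba (y : M.carrier) : M.sq2 (M.sq2 (M.sq1 y)) = 0 := by
  rw [M.sq2_sq2, M.sq1_sq1, map_zero, map_zero]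

lemma w_abb (y : M.carrier) : M.sq1 (M.sq2 (M.sq2 y)) = 0 := by
  rw [M.sq2_sq2, M.sq1_sq1]

lemma w_baba (y : M.carrier) :
    M.sq2 (M.sq1 (M.sq2 (M.sq1 y))) = M.sq1 (M.sq2 (M.sq1 (M.sq2 y))) := by
  rw [← M.sq2_sq2, M.sq2_sq2 (M.sq2 y)]

lemma mem_gr_of_eq {a b : ℤ} {y : M.carrier} (hy : y ∈ M.gr a) (h : a = b) :
    y ∈ M.gr b := h ▸ hy

lemma exists_graded_functional (k : ℤ) (v : M.carrier) (hvk : v ∈ M.gr k) (hv : v ≠ 0) :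
    ∃ f : M.carrier →ₗ[ZMod 2] ZMod 2,
      f v = 1 ∧ ∀ j : ℤ, j ≠ k → ∀ y ∈ M.gr j, f y = 0 := by
  classical
  set S : Submodule (ZMod 2) M.carrier := Submodule.span (ZMod 2) {v} with hS
  set N : Submodule (ZMod 2) M.carrier := ⨆ (j) (_ : j ≠ k), M.gr j with hN
  have hSle : S ≤ M.gr k := by
    rw [hS, Submodule.span_le, Set.singleton_subset_iff]; exact hvk
  have hSN : Disjoint S N := Disjoint.mono_left hSle (M.indep k)
  obtain ⟨T, hT⟩ := Submodule.exists_isCompl (S ⊔ N)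
  have hcompl : IsCompl S (N ⊔ T) := by
    constructor
    · rw [Submodule.disjoint_def]
      intro a haS haNT
      obtain ⟨n, hn, t, ht, hnt⟩ := Submodule.mem_sup.mp haNT
      have ht0 : t = 0 := by
        have htST : t ∈ (S ⊔ N) ⊓ T := by
          refine ⟨?_, ht⟩
          have : t = a - n := by rw [← hnt]; abel
          rw [this]
          exact Submodule.sub_mem _ (Submodule.mem_sup_left haS) (Submodule.mem_sup_right hn)
        have := hT.disjoint.le_bot htST
        simpa using this
      have han : a = n := by rw [← hnt, ht0, add_zero]
      have : a ∈ S ⊓ N := ⟨haS, han ▸ hn⟩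
      have := hSN.le_bot this
      simpa using this
    · rw [codisjoint_iff, ← sup_assoc]
      exact codisjoint_iff.mp hT.codisjoint
  refine ⟨(LinearEquiv.coord (ZMod 2) M.carrier v hv).toLinearMap ∘ₗ
      Submodule.linearProjOfIsCompl S (N ⊔ T) hcompl, ?_, ?_⟩
  · have h1 : Submodule.linearProjOfIsCompl S (N ⊔ T) hcompl v =
        ⟨v, Submodule.mem_span_singleton_self v⟩ :=
      Submodule.linearProjOfIsCompl_apply_left hcompl ⟨v, Submodule.mem_span_singleton_self v⟩
    simp [h1, LinearEquiv.coord_self]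
  · intro j hj y hy
    have hyN : y ∈ N := by
      rw [hN]
      exact Submodule.mem_iSup_of_mem j (Submodule.mem_iSup_of_mem hj hy)
    have h2 : Submodule.linearProjOfIsCompl S (N ⊔ T) hcompl y = 0 :=
      Submodule.projectionOnto_apply_of_mem_right hcompl (Submodule.mem_sup_left hyN)
    simp [h2]

end A1Module

end AuxiliaryLemmas

theorem A1Module.free_summand (M : A1Module) (x : M.carrier) (hx : x ∈ M.gr 0)
    (hv : M.sq1 (M.sq2 (M.sq1 (M.sq2 x))) ≠ 0) :
    ∃ p : Submodule (ZMod 2) M.carrier, M.IsSummand p ∧ M.IsFreeOn p ∧ x ∈ p := by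
  classical
  have d1 : M.sq1 x ∈ M.gr 1 := M.mem_gr_of_eq (M.sq1_gr _ _ hx) (by norm_num)
  have d2 : M.sq2 x ∈ M.gr 2 := M.mem_gr_of_eq (M.sq2_gr _ _ hx) (by norm_num)
  have d3 : M.sq1 (M.sq2 x) ∈ M.gr 3 := M.mem_gr_of_eq (M.sq1_gr _ _ d2) (by norm_num)
  have d4 : M.sq2 (M.sq1 x) ∈ M.gr 3 := M.mem_gr_of_eq (M.sq2_gr _ _ d1) (by norm_num)
  have d5 : M.sq1 (M.sq2 (M.sq1 x)) ∈ M.gr 4 := M.mem_gr_of_eq (M.sq1_gr _ _ d4) (by norm_num)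
  have d6 : M.sq2 (M.sq1 (M.sq2 x)) ∈ M.gr 5 := M.mem_gr_of_eq (M.sq2_gr _ _ d3) (by norm_num)
  have d7 : M.sq1 (M.sq2 (M.sq1 (M.sq2 x))) ∈ M.gr 6 :=
    M.mem_gr_of_eq (M.sq1_gr _ _ d6) (by norm_num)
  obtain ⟨f, hfv, hf0⟩ := M.exists_graded_functional 6 _ d7 hv
  have hfx : f x = 0 := hf0 0 (by norm_num) x hx
  have hfa : f (M.sq1 x) = 0 := hf0 1 (by norm_num) _ d1
  have hfb : f (M.sq2 x) = 0 := hf0 2 (by norm_num) _ d2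
  have hfab : f (M.sq1 (M.sq2 x)) = 0 := hf0 3 (by norm_num) _ d3
  have hfba : f (M.sq2 (M.sq1 x)) = 0 := hf0 3 (by norm_num) _ d4
  have hfaba : f (M.sq1 (M.sq2 (M.sq1 x))) = 0 := hf0 4 (by norm_num) _ d5
  have hfbab : f (M.sq2 (M.sq1 (M.sq2 x))) = 0 := hf0 5 (by norm_num) _ d6
  obtain ⟨π, πapp⟩ : ∃ π : M.carrier →ₗ[ZMod 2] M.carrier, ∀ m, π m =
      f (M.sq1 (M.sq2 (M.sq1 (M.sq2 m)))) • x
      + f (M.sq2 (M.sq1 (M.sq2 m))) • M.sq1 x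
      + f (M.sq1 (M.sq2 (M.sq1 m))) • M.sq2 x
      + f (M.sq1 (M.sq2 m)) • M.sq1 (M.sq2 x)
      + f (M.sq2 (M.sq1 m)) • M.sq2 (M.sq1 x)
      + f (M.sq2 m) • M.sq1 (M.sq2 (M.sq1 x))
      + f (M.sq1 m) • M.sq2 (M.sq1 (M.sq2 x))
      + f m • M.sq1 (M.sq2 (M.sq1 (M.sq2 x))) :=
    ⟨(f ∘ₗ (M.sq1 ∘ₗ M.sq2 ∘ₗ M.sq1 ∘ₗ M.sq2)).smulRight x
      + (f ∘ₗ (M.sq2 ∘ₗ M.sq1 ∘ₗ M.sq2)).smulRight (M.sq1 x)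
      + (f ∘ₗ (M.sq1 ∘ₗ M.sq2 ∘ₗ M.sq1)).smulRight (M.sq2 x)
      + (f ∘ₗ (M.sq1 ∘ₗ M.sq2)).smulRight (M.sq1 (M.sq2 x))
      + (f ∘ₗ (M.sq2 ∘ₗ M.sq1)).smulRight (M.sq2 (M.sq1 x))
      + (f ∘ₗ M.sq2).smulRight (M.sq1 (M.sq2 (M.sq1 x)))
      + (f ∘ₗ M.sq1).smulRight (M.sq2 (M.sq1 (M.sq2 x)))
      + f.smulRight (M.sq1 (M.sq2 (M.sq1 (M.sq2 x)))),
     fun m => by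
       simp only [LinearMap.add_apply, LinearMap.smulRight_apply, LinearMap.coe_comp,
         Function.comp_apply]⟩
  have hc1 : ∀ m, π (M.sq1 m) = M.sq1 (π m) := by
    intro m
    rw [πapp, πapp]
    simp [M.sq1_sq1, M.w_bba, M.w_abb, M.w_baba, map_add, map_smul]
  have hc2 : ∀ m, π (M.sq2 m) = M.sq2 (π m) := by
    intro m
    rw [πapp, πapp]
    simp [M.sq1_sq1, M.sq2_sq2, M.w_bba, M.w_abb, M.w_baba, map_add, map_smul]
  have hproj : ∀ i : Fin 8, π (M.w8 i x) = M.w8 i x := by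
    intro i
    fin_cases i
    · show π (x) = x
      rw [πapp]
      simp [M.sq1_sq1, M.sq2_sq2, M.w_bba, M.w_abb, M.w_baba, hfx, hfa, hfb, hfab, hfba, hfaba, hfbab, hfv]
    · show π (M.sq1 (x)) = M.sq1 (x)
      rw [πapp]
      simp [M.sq1_sq1, M.sq2_sq2, M.w_bba, M.w_abb, M.w_baba, hfx, hfa, hfb, hfab, hfba, hfaba, hfbab, hfv]
    · show π (M.sq2 (x)) = M.sq2 (x)
      rw [πapp]
      simp [M.sq1_sq1, M.sq2_sq2, M.w_bba, M.w_abb, M.w_baba, hfx, hfa, hfb, hfab, hfba, hfaba, hfbab, hfv]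
    · show π (M.sq1 (M.sq2 (x))) = M.sq1 (M.sq2 (x))
      rw [πapp]
      simp [M.sq1_sq1, M.sq2_sq2, M.w_bba, M.w_abb, M.w_baba, hfx, hfa, hfb, hfab, hfba, hfaba, hfbab, hfv]
    · show π (M.sq2 (M.sq1 (x))) = M.sq2 (M.sq1 (x))
      rw [πapp]
      simp [M.sq1_sq1, M.sq2_sq2, M.w_bba, M.w_abb, M.w_baba, hfx, hfa, hfb, hfab, hfba, hfaba, hfbab, hfv]
    · show π (M.sq1 (M.sq2 (M.sq1 (x)))) = M.sq1 (M.sq2 (M.sq1 (x)))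
      rw [πapp]
      simp [M.sq1_sq1, M.sq2_sq2, M.w_bba, M.w_abb, M.w_baba, hfx, hfa, hfb, hfab, hfba, hfaba, hfbab, hfv]
    · show π (M.sq2 (M.sq1 (M.sq2 (x)))) = M.sq2 (M.sq1 (M.sq2 (x)))
      rw [πapp]
      simp [M.sq1_sq1, M.sq2_sq2, M.w_bba, M.w_abb, M.w_baba, hfx, hfa, hfb, hfab, hfba, hfaba, hfbab, hfv]
    · show π (M.sq1 (M.sq2 (M.sq1 (M.sq2 (x))))) = M.sq1 (M.sq2 (M.sq1 (M.sq2 (x))))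
      rw [πapp]
      simp [M.sq1_sq1, M.sq2_sq2, M.w_bba, M.w_abb, M.w_baba, hfx, hfa, hfb, hfab, hfba, hfaba, hfbab, hfv]
  have hdual : ∀ j i : Fin 8,
      f (M.w8 (![7, 6, 5, 3, 4, 2, 1, 0] j) (M.w8 i x)) = if i = j then 1 else 0 := by
    intro j i
    fin_cases j <;> fin_cases i
    · show f (M.sq1 (M.sq2 (M.sq1 (M.sq2 (x))))) = if (0 : Fin 8) = 0 then 1 else 0
      simp [M.sq1_sq1, M.sq2_sq2, M.w_bba, M.w_abb, M.w_baba, hfx, hfa, hfb, hfab, hfba, hfaba, hfbab, hfv]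
    · show f (M.sq1 (M.sq2 (M.sq1 (M.sq2 (M.sq1 (x)))))) = if (1 : Fin 8) = 0 then 1 else 0
      simp [M.sq1_sq1, M.sq2_sq2, M.w_bba, M.w_abb, M.w_baba, hfx, hfa, hfb, hfab, hfba, hfaba, hfbab, hfv]
    · show f (M.sq1 (M.sq2 (M.sq1 (M.sq2 (M.sq2 (x)))))) = if (2 : Fin 8) = 0 then 1 else 0
      simp [M.sq1_sq1, M.sq2_sq2, M.w_bba, M.w_abb, M.w_baba, hfx, hfa, hfb, hfab, hfba, hfaba, hfbab, hfv]
    · show f (M.sq1 (M.sq2 (M.sq1 (M.sq2 (M.sq1 (M.sq2 (x))))))) = if (3 : Fin 8) = 0 then 1 else 0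
      simp [M.sq1_sq1, M.sq2_sq2, M.w_bba, M.w_abb, M.w_baba, hfx, hfa, hfb, hfab, hfba, hfaba, hfbab, hfv]
    · show f (M.sq1 (M.sq2 (M.sq1 (M.sq2 (M.sq2 (M.sq1 (x))))))) = if (4 : Fin 8) = 0 then 1 else 0
      simp [M.sq1_sq1, M.sq2_sq2, M.w_bba, M.w_abb, M.w_baba, hfx, hfa, hfb, hfab, hfba, hfaba, hfbab, hfv]
    · show f (M.sq1 (M.sq2 (M.sq1 (M.sq2 (M.sq1 (M.sq2 (M.sq1 (x)))))))) = if (5 : Fin 8) = 0 then 1 else 0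
      simp [M.sq1_sq1, M.sq2_sq2, M.w_bba, M.w_abb, M.w_baba, hfx, hfa, hfb, hfab, hfba, hfaba, hfbab, hfv]
    · show f (M.sq1 (M.sq2 (M.sq1 (M.sq2 (M.sq2 (M.sq1 (M.sq2 (x)))))))) = if (6 : Fin 8) = 0 then 1 else 0
      simp [M.sq1_sq1, M.sq2_sq2, M.w_bba, M.w_abb, M.w_baba, hfx, hfa, hfb, hfab, hfba, hfaba, hfbab, hfv]
    · show f (M.sq1 (M.sq2 (M.sq1 (M.sq2 (M.sq1 (M.sq2 (M.sq1 (M.sq2 (x))))))))) = if (7 : Fin 8) = 0 then 1 else 0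
      simp [M.sq1_sq1, M.sq2_sq2, M.w_bba, M.w_abb, M.w_baba, hfx, hfa, hfb, hfab, hfba, hfaba, hfbab, hfv]
    · show f (M.sq2 (M.sq1 (M.sq2 (x)))) = if (0 : Fin 8) = 1 then 1 else 0
      simp [M.sq1_sq1, M.sq2_sq2, M.w_bba, M.w_abb, M.w_baba, hfx, hfa, hfb, hfab, hfba, hfaba, hfbab, hfv]
    · show f (M.sq2 (M.sq1 (M.sq2 (M.sq1 (x))))) = if (1 : Fin 8) = 1 then 1 else 0
      simp [M.sq1_sq1, M.sq2_sq2, M.w_bba, M.w_abb, M.w_baba, hfx, hfa, hfb, hfab, hfba, hfaba, hfbab, hfv]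
    · show f (M.sq2 (M.sq1 (M.sq2 (M.sq2 (x))))) = if (2 : Fin 8) = 1 then 1 else 0
      simp [M.sq1_sq1, M.sq2_sq2, M.w_bba, M.w_abb, M.w_baba, hfx, hfa, hfb, hfab, hfba, hfaba, hfbab, hfv]
    · show f (M.sq2 (M.sq1 (M.sq2 (M.sq1 (M.sq2 (x)))))) = if (3 : Fin 8) = 1 then 1 else 0
      simp [M.sq1_sq1, M.sq2_sq2, M.w_bba, M.w_abb, M.w_baba, hfx, hfa, hfb, hfab, hfba, hfaba, hfbab, hfv]
    · show f (M.sq2 (M.sq1 (M.sq2 (M.sq2 (M.sq1 (x)))))) = if (4 : Fin 8) = 1 then 1 else 0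
      simp [M.sq1_sq1, M.sq2_sq2, M.w_bba, M.w_abb, M.w_baba, hfx, hfa, hfb, hfab, hfba, hfaba, hfbab, hfv]
    · show f (M.sq2 (M.sq1 (M.sq2 (M.sq1 (M.sq2 (M.sq1 (x))))))) = if (5 : Fin 8) = 1 then 1 else 0
      simp [M.sq1_sq1, M.sq2_sq2, M.w_bba, M.w_abb, M.w_baba, hfx, hfa, hfb, hfab, hfba, hfaba, hfbab, hfv]
    · show f (M.sq2 (M.sq1 (M.sq2 (M.sq2 (M.sq1 (M.sq2 (x))))))) = if (6 : Fin 8) = 1 then 1 else 0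
      simp [M.sq1_sq1, M.sq2_sq2, M.w_bba, M.w_abb, M.w_baba, hfx, hfa, hfb, hfab, hfba, hfaba, hfbab, hfv]
    · show f (M.sq2 (M.sq1 (M.sq2 (M.sq1 (M.sq2 (M.sq1 (M.sq2 (x)))))))) = if (7 : Fin 8) = 1 then 1 else 0
      simp [M.sq1_sq1, M.sq2_sq2, M.w_bba, M.w_abb, M.w_baba, hfx, hfa, hfb, hfab, hfba, hfaba, hfbab, hfv]
    · show f (M.sq1 (M.sq2 (M.sq1 (x)))) = if (0 : Fin 8) = 2 then 1 else 0
      simp [M.sq1_sq1, M.sq2_sq2, M.w_bba, M.w_abb, M.w_baba, hfx, hfa, hfb, hfab, hfba, hfaba, hfbab, hfv]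
    · show f (M.sq1 (M.sq2 (M.sq1 (M.sq1 (x))))) = if (1 : Fin 8) = 2 then 1 else 0
      simp [M.sq1_sq1, M.sq2_sq2, M.w_bba, M.w_abb, M.w_baba, hfx, hfa, hfb, hfab, hfba, hfaba, hfbab, hfv]
    · show f (M.sq1 (M.sq2 (M.sq1 (M.sq2 (x))))) = if (2 : Fin 8) = 2 then 1 else 0
      simp [M.sq1_sq1, M.sq2_sq2, M.w_bba, M.w_abb, M.w_baba, hfx, hfa, hfb, hfab, hfba, hfaba, hfbab, hfv]
    · show f (M.sq1 (M.sq2 (M.sq1 (M.sq1 (M.sq2 (x)))))) = if (3 : Fin 8) = 2 then 1 else 0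
      simp [M.sq1_sq1, M.sq2_sq2, M.w_bba, M.w_abb, M.w_baba, hfx, hfa, hfb, hfab, hfba, hfaba, hfbab, hfv]
    · show f (M.sq1 (M.sq2 (M.sq1 (M.sq2 (M.sq1 (x)))))) = if (4 : Fin 8) = 2 then 1 else 0
      simp [M.sq1_sq1, M.sq2_sq2, M.w_bba, M.w_abb, M.w_baba, hfx, hfa, hfb, hfab, hfba, hfaba, hfbab, hfv]
    · show f (M.sq1 (M.sq2 (M.sq1 (M.sq1 (M.sq2 (M.sq1 (x))))))) = if (5 : Fin 8) = 2 then 1 else 0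
      simp [M.sq1_sq1, M.sq2_sq2, M.w_bba, M.w_abb, M.w_baba, hfx, hfa, hfb, hfab, hfba, hfaba, hfbab, hfv]
    · show f (M.sq1 (M.sq2 (M.sq1 (M.sq2 (M.sq1 (M.sq2 (x))))))) = if (6 : Fin 8) = 2 then 1 else 0
      simp [M.sq1_sq1, M.sq2_sq2, M.w_bba, M.w_abb, M.w_baba, hfx, hfa, hfb, hfab, hfba, hfaba, hfbab, hfv]
    · show f (M.sq1 (M.sq2 (M.sq1 (M.sq1 (M.sq2 (M.sq1 (M.sq2 (x)))))))) = if (7 : Fin 8) = 2 then 1 else 0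
      simp [M.sq1_sq1, M.sq2_sq2, M.w_bba, M.w_abb, M.w_baba, hfx, hfa, hfb, hfab, hfba, hfaba, hfbab, hfv]
    · show f (M.sq1 (M.sq2 (x))) = if (0 : Fin 8) = 3 then 1 else 0
      simp [M.sq1_sq1, M.sq2_sq2, M.w_bba, M.w_abb, M.w_baba, hfx, hfa, hfb, hfab, hfba, hfaba, hfbab, hfv]
    · show f (M.sq1 (M.sq2 (M.sq1 (x)))) = if (1 : Fin 8) = 3 then 1 else 0
      simp [M.sq1_sq1, M.sq2_sq2, M.w_bba, M.w_abb, M.w_baba, hfx, hfa, hfb, hfab, hfba, hfaba, hfbab, hfv]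
    · show f (M.sq1 (M.sq2 (M.sq2 (x)))) = if (2 : Fin 8) = 3 then 1 else 0
      simp [M.sq1_sq1, M.sq2_sq2, M.w_bba, M.w_abb, M.w_baba, hfx, hfa, hfb, hfab, hfba, hfaba, hfbab, hfv]
    · show f (M.sq1 (M.sq2 (M.sq1 (M.sq2 (x))))) = if (3 : Fin 8) = 3 then 1 else 0
      simp [M.sq1_sq1, M.sq2_sq2, M.w_bba, M.w_abb, M.w_baba, hfx, hfa, hfb, hfab, hfba, hfaba, hfbab, hfv]
    · show f (M.sq1 (M.sq2 (M.sq2 (M.sq1 (x))))) = if (4 : Fin 8) = 3 then 1 else 0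
      simp [M.sq1_sq1, M.sq2_sq2, M.w_bba, M.w_abb, M.w_baba, hfx, hfa, hfb, hfab, hfba, hfaba, hfbab, hfv]
    · show f (M.sq1 (M.sq2 (M.sq1 (M.sq2 (M.sq1 (x)))))) = if (5 : Fin 8) = 3 then 1 else 0
      simp [M.sq1_sq1, M.sq2_sq2, M.w_bba, M.w_abb, M.w_baba, hfx, hfa, hfb, hfab, hfba, hfaba, hfbab, hfv]
    · show f (M.sq1 (M.sq2 (M.sq2 (M.sq1 (M.sq2 (x)))))) = if (6 : Fin 8) = 3 then 1 else 0
      simp [M.sq1_sq1, M.sq2_sq2, M.w_bba, M.w_abb, M.w_baba, hfx, hfa, hfb, hfab, hfba, hfaba, hfbab, hfv]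
    · show f (M.sq1 (M.sq2 (M.sq1 (M.sq2 (M.sq1 (M.sq2 (x))))))) = if (7 : Fin 8) = 3 then 1 else 0
      simp [M.sq1_sq1, M.sq2_sq2, M.w_bba, M.w_abb, M.w_baba, hfx, hfa, hfb, hfab, hfba, hfaba, hfbab, hfv]
    · show f (M.sq2 (M.sq1 (x))) = if (0 : Fin 8) = 4 then 1 else 0
      simp [M.sq1_sq1, M.sq2_sq2, M.w_bba, M.w_abb, M.w_baba, hfx, hfa, hfb, hfab, hfba, hfaba, hfbab, hfv]
    · show f (M.sq2 (M.sq1 (M.sq1 (x)))) = if (1 : Fin 8) = 4 then 1 else 0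
      simp [M.sq1_sq1, M.sq2_sq2, M.w_bba, M.w_abb, M.w_baba, hfx, hfa, hfb, hfab, hfba, hfaba, hfbab, hfv]
    · show f (M.sq2 (M.sq1 (M.sq2 (x)))) = if (2 : Fin 8) = 4 then 1 else 0
      simp [M.sq1_sq1, M.sq2_sq2, M.w_bba, M.w_abb, M.w_baba, hfx, hfa, hfb, hfab, hfba, hfaba, hfbab, hfv]
    · show f (M.sq2 (M.sq1 (M.sq1 (M.sq2 (x))))) = if (3 : Fin 8) = 4 then 1 else 0
      simp [M.sq1_sq1, M.sq2_sq2, M.w_bba, M.w_abb, M.w_baba, hfx, hfa, hfb, hfab, hfba, hfaba, hfbab, hfv]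
    · show f (M.sq2 (M.sq1 (M.sq2 (M.sq1 (x))))) = if (4 : Fin 8) = 4 then 1 else 0
      simp [M.sq1_sq1, M.sq2_sq2, M.w_bba, M.w_abb, M.w_baba, hfx, hfa, hfb, hfab, hfba, hfaba, hfbab, hfv]
    · show f (M.sq2 (M.sq1 (M.sq1 (M.sq2 (M.sq1 (x)))))) = if (5 : Fin 8) = 4 then 1 else 0
      simp [M.sq1_sq1, M.sq2_sq2, M.w_bba, M.w_abb, M.w_baba, hfx, hfa, hfb, hfab, hfba, hfaba, hfbab, hfv]
    · show f (M.sq2 (M.sq1 (M.sq2 (M.sq1 (M.sq2 (x)))))) = if (6 : Fin 8) = 4 then 1 else 0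
      simp [M.sq1_sq1, M.sq2_sq2, M.w_bba, M.w_abb, M.w_baba, hfx, hfa, hfb, hfab, hfba, hfaba, hfbab, hfv]
    · show f (M.sq2 (M.sq1 (M.sq1 (M.sq2 (M.sq1 (M.sq2 (x))))))) = if (7 : Fin 8) = 4 then 1 else 0
      simp [M.sq1_sq1, M.sq2_sq2, M.w_bba, M.w_abb, M.w_baba, hfx, hfa, hfb, hfab, hfba, hfaba, hfbab, hfv]
    · show f (M.sq2 (x)) = if (0 : Fin 8) = 5 then 1 else 0
      simp [M.sq1_sq1, M.sq2_sq2, M.w_bba, M.w_abb, M.w_baba, hfx, hfa, hfb, hfab, hfba, hfaba, hfbab, hfv]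
    · show f (M.sq2 (M.sq1 (x))) = if (1 : Fin 8) = 5 then 1 else 0
      simp [M.sq1_sq1, M.sq2_sq2, M.w_bba, M.w_abb, M.w_baba, hfx, hfa, hfb, hfab, hfba, hfaba, hfbab, hfv]
    · show f (M.sq2 (M.sq2 (x))) = if (2 : Fin 8) = 5 then 1 else 0
      simp [M.sq1_sq1, M.sq2_sq2, M.w_bba, M.w_abb, M.w_baba, hfx, hfa, hfb, hfab, hfba, hfaba, hfbab, hfv]
    · show f (M.sq2 (M.sq1 (M.sq2 (x)))) = if (3 : Fin 8) = 5 then 1 else 0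
      simp [M.sq1_sq1, M.sq2_sq2, M.w_bba, M.w_abb, M.w_baba, hfx, hfa, hfb, hfab, hfba, hfaba, hfbab, hfv]
    · show f (M.sq2 (M.sq2 (M.sq1 (x)))) = if (4 : Fin 8) = 5 then 1 else 0
      simp [M.sq1_sq1, M.sq2_sq2, M.w_bba, M.w_abb, M.w_baba, hfx, hfa, hfb, hfab, hfba, hfaba, hfbab, hfv]
    · show f (M.sq2 (M.sq1 (M.sq2 (M.sq1 (x))))) = if (5 : Fin 8) = 5 then 1 else 0
      simp [M.sq1_sq1, M.sq2_sq2, M.w_bba, M.w_abb, M.w_baba, hfx, hfa, hfb, hfab, hfba, hfaba, hfbab, hfv]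
    · show f (M.sq2 (M.sq2 (M.sq1 (M.sq2 (x))))) = if (6 : Fin 8) = 5 then 1 else 0
      simp [M.sq1_sq1, M.sq2_sq2, M.w_bba, M.w_abb, M.w_baba, hfx, hfa, hfb, hfab, hfba, hfaba, hfbab, hfv]
    · show f (M.sq2 (M.sq1 (M.sq2 (M.sq1 (M.sq2 (x)))))) = if (7 : Fin 8) = 5 then 1 else 0
      simp [M.sq1_sq1, M.sq2_sq2, M.w_bba, M.w_abb, M.w_baba, hfx, hfa, hfb, hfab, hfba, hfaba, hfbab, hfv]
    · show f (M.sq1 (x)) = if (0 : Fin 8) = 6 then 1 else 0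
      simp [M.sq1_sq1, M.sq2_sq2, M.w_bba, M.w_abb, M.w_baba, hfx, hfa, hfb, hfab, hfba, hfaba, hfbab, hfv]
    · show f (M.sq1 (M.sq1 (x))) = if (1 : Fin 8) = 6 then 1 else 0
      simp [M.sq1_sq1, M.sq2_sq2, M.w_bba, M.w_abb, M.w_baba, hfx, hfa, hfb, hfab, hfba, hfaba, hfbab, hfv]
    · show f (M.sq1 (M.sq2 (x))) = if (2 : Fin 8) = 6 then 1 else 0
      simp [M.sq1_sq1, M.sq2_sq2, M.w_bba, M.w_abb, M.w_baba, hfx, hfa, hfb, hfab, hfba, hfaba, hfbab, hfv]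
    · show f (M.sq1 (M.sq1 (M.sq2 (x)))) = if (3 : Fin 8) = 6 then 1 else 0
      simp [M.sq1_sq1, M.sq2_sq2, M.w_bba, M.w_abb, M.w_baba, hfx, hfa, hfb, hfab, hfba, hfaba, hfbab, hfv]
    · show f (M.sq1 (M.sq2 (M.sq1 (x)))) = if (4 : Fin 8) = 6 then 1 else 0
      simp [M.sq1_sq1, M.sq2_sq2, M.w_bba, M.w_abb, M.w_baba, hfx, hfa, hfb, hfab, hfba, hfaba, hfbab, hfv]
    · show f (M.sq1 (M.sq1 (M.sq2 (M.sq1 (x))))) = if (5 : Fin 8) = 6 then 1 else 0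
      simp [M.sq1_sq1, M.sq2_sq2, M.w_bba, M.w_abb, M.w_baba, hfx, hfa, hfb, hfab, hfba, hfaba, hfbab, hfv]
    · show f (M.sq1 (M.sq2 (M.sq1 (M.sq2 (x))))) = if (6 : Fin 8) = 6 then 1 else 0
      simp [M.sq1_sq1, M.sq2_sq2, M.w_bba, M.w_abb, M.w_baba, hfx, hfa, hfb, hfab, hfba, hfaba, hfbab, hfv]
    · show f (M.sq1 (M.sq1 (M.sq2 (M.sq1 (M.sq2 (x)))))) = if (7 : Fin 8) = 6 then 1 else 0
      simp [M.sq1_sq1, M.sq2_sq2, M.w_bba, M.w_abb, M.w_baba, hfx, hfa, hfb, hfab, hfba, hfaba, hfbab, hfv]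
    · show f (x) = if (0 : Fin 8) = 7 then 1 else 0
      simp [M.sq1_sq1, M.sq2_sq2, M.w_bba, M.w_abb, M.w_baba, hfx, hfa, hfb, hfab, hfba, hfaba, hfbab, hfv]
    · show f (M.sq1 (x)) = if (1 : Fin 8) = 7 then 1 else 0
      simp [M.sq1_sq1, M.sq2_sq2, M.w_bba, M.w_abb, M.w_baba, hfx, hfa, hfb, hfab, hfba, hfaba, hfbab, hfv]
    · show f (M.sq2 (x)) = if (2 : Fin 8) = 7 then 1 else 0
      simp [M.sq1_sq1, M.sq2_sq2, M.w_bba, M.w_abb, M.w_baba, hfx, hfa, hfb, hfab, hfba, hfaba, hfbab, hfv]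
    · show f (M.sq1 (M.sq2 (x))) = if (3 : Fin 8) = 7 then 1 else 0
      simp [M.sq1_sq1, M.sq2_sq2, M.w_bba, M.w_abb, M.w_baba, hfx, hfa, hfb, hfab, hfba, hfaba, hfbab, hfv]
    · show f (M.sq2 (M.sq1 (x))) = if (4 : Fin 8) = 7 then 1 else 0
      simp [M.sq1_sq1, M.sq2_sq2, M.w_bba, M.w_abb, M.w_baba, hfx, hfa, hfb, hfab, hfba, hfaba, hfbab, hfv]
    · show f (M.sq1 (M.sq2 (M.sq1 (x)))) = if (5 : Fin 8) = 7 then 1 else 0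
      simp [M.sq1_sq1, M.sq2_sq2, M.w_bba, M.w_abb, M.w_baba, hfx, hfa, hfb, hfab, hfba, hfaba, hfbab, hfv]
    · show f (M.sq2 (M.sq1 (M.sq2 (x)))) = if (6 : Fin 8) = 7 then 1 else 0
      simp [M.sq1_sq1, M.sq2_sq2, M.w_bba, M.w_abb, M.w_baba, hfx, hfa, hfb, hfab, hfba, hfaba, hfbab, hfv]
    · show f (M.sq1 (M.sq2 (M.sq1 (M.sq2 (x))))) = if (7 : Fin 8) = 7 then 1 else 0
      simp [M.sq1_sq1, M.sq2_sq2, M.w_bba, M.w_abb, M.w_baba, hfx, hfa, hfb, hfab, hfba, hfaba, hfbab, hfv]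
  have hli : LinearIndependent (ZMod 2) (fun i : Fin 8 => M.w8 i x) := by
    rw [Fintype.linearIndependent_iff]
    intro c hc j
    have h := congrArg (f ∘ₗ M.w8 (![7, 6, 5, 3, 4, 2, 1, 0] j)) hc
    simpa [map_sum, map_smul, hdual, smul_eq_mul, mul_ite, mul_one, mul_zero,
      Finset.sum_ite_eq, Finset.sum_ite_eq'] using h
  set p : Submodule (ZMod 2) M.carrier :=
    Submodule.span (ZMod 2)
      (Set.range fun q : Unit × Fin 8 => M.w8 q.2 ((fun _ : Unit => x) q.1)) with hpdef
  have hgen : ∀ i : Fin 8, M.w8 i x ∈ p := fun i => Submodule.subset_span ⟨((), i), rfl⟩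
  have pm0 : x ∈ p := hgen 0
  have pm1 : M.sq1 (x) ∈ p := hgen 1
  have pm2 : M.sq2 (x) ∈ p := hgen 2
  have pm3 : M.sq1 (M.sq2 (x)) ∈ p := hgen 3
  have pm4 : M.sq2 (M.sq1 (x)) ∈ p := hgen 4
  have pm5 : M.sq1 (M.sq2 (M.sq1 (x))) ∈ p := hgen 5
  have pm6 : M.sq2 (M.sq1 (M.sq2 (x))) ∈ p := hgen 6
  have pm7 : M.sq1 (M.sq2 (M.sq1 (M.sq2 (x)))) ∈ p := hgen 7
  have hπp : ∀ m, π m ∈ p := by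
    intro m
    rw [πapp]
    exact add_mem (add_mem (add_mem (add_mem (add_mem (add_mem (add_mem
      (Submodule.smul_mem _ _ pm0) (Submodule.smul_mem _ _ pm1)) (Submodule.smul_mem _ _ pm2))
      (Submodule.smul_mem _ _ pm3)) (Submodule.smul_mem _ _ pm4)) (Submodule.smul_mem _ _ pm5))
      (Submodule.smul_mem _ _ pm6)) (Submodule.smul_mem _ _ pm7)
  have hidp : ∀ y ∈ p, π y = y := by
    intro y hy
    rw [hpdef] at hy
    refine Submodule.span_induction (p := fun y _ => π y = y) ?_ (map_zero π) ?_ ?_ hy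
    · rintro _ ⟨⟨u, i⟩, rfl⟩
      exact hproj i
    · intro a b _ _ ha hb
      rw [map_add, ha, hb]
    · intro c a _ ha
      rw [map_smul, ha]
  have hπgr : ∀ (k : ℤ), ∀ m ∈ M.gr k, π m ∈ M.gr k := by
    intro k m hm
    rw [πapp]
    refine add_mem (add_mem (add_mem (add_mem (add_mem (add_mem (add_mem ?_ ?_) ?_) ?_) ?_)
      ?_) ?_) ?_
    · rcases eq_or_ne k 0 with rfl | hne
      · exact Submodule.smul_mem _ _ hx
      · rw [hf0 (k + 2 + 1 + 2 + 1) (by omega) _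
          (M.sq1_gr _ _ (M.sq2_gr _ _ (M.sq1_gr _ _ (M.sq2_gr _ _ hm)))), zero_smul]
        exact zero_mem _
    · rcases eq_or_ne k 1 with rfl | hne
      · exact Submodule.smul_mem _ _ d1
      · rw [hf0 (k + 2 + 1 + 2) (by omega) _
          (M.sq2_gr _ _ (M.sq1_gr _ _ (M.sq2_gr _ _ hm))), zero_smul]
        exact zero_mem _
    · rcases eq_or_ne k 2 with rfl | hne
      · exact Submodule.smul_mem _ _ d2
      · rw [hf0 (k + 1 + 2 + 1) (by omega) _
          (M.sq1_gr _ _ (M.sq2_gr _ _ (M.sq1_gr _ _ hm))), zero_smul]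
        exact zero_mem _
    · rcases eq_or_ne k 3 with rfl | hne
      · exact Submodule.smul_mem _ _ d3
      · rw [hf0 (k + 2 + 1) (by omega) _ (M.sq1_gr _ _ (M.sq2_gr _ _ hm)), zero_smul]
        exact zero_mem _
    · rcases eq_or_ne k 3 with rfl | hne
      · exact Submodule.smul_mem _ _ d4
      · rw [hf0 (k + 1 + 2) (by omega) _ (M.sq2_gr _ _ (M.sq1_gr _ _ hm)), zero_smul]
        exact zero_mem _
    · rcases eq_or_ne k 4 with rfl | hne
      · exact Submodule.smul_mem _ _ d5
      · rw [hf0 (k + 2) (by omega) _ (M.sq2_gr _ _ hm), zero_smul]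
        exact zero_mem _
    · rcases eq_or_ne k 5 with rfl | hne
      · exact Submodule.smul_mem _ _ d6
      · rw [hf0 (k + 1) (by omega) _ (M.sq1_gr _ _ hm), zero_smul]
        exact zero_mem _
    · rcases eq_or_ne k 6 with rfl | hne
      · exact Submodule.smul_mem _ _ d7
      · rw [hf0 k (by omega) _ hm, zero_smul]
        exact zero_mem _
  set q : Submodule (ZMod 2) M.carrier := ⨆ k : ℤ, (LinearMap.ker π ⊓ M.gr k) with hqdef
  have hqle : ∀ k : ℤ, LinearMap.ker π ⊓ M.gr k ≤ q := by
    intro k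
    rw [hqdef]
    exact le_iSup (fun k => LinearMap.ker π ⊓ M.gr k) k
  have hqker : q ≤ LinearMap.ker π := by
    rw [hqdef]
    exact iSup_le fun k => inf_le_left
  have hq1 : ∀ y ∈ q, M.sq1 y ∈ q := by
    intro y hy
    rw [hqdef] at hy
    refine Submodule.iSup_induction (motive := fun y => M.sq1 y ∈ q) _ hy ?_ ?_ ?_
    · rintro k z ⟨hz1, hz2⟩
      refine hqle (k + 1) ⟨?_, M.sq1_gr _ _ hz2⟩
      have hz0 : π z = 0 := hz1
      exact LinearMap.mem_ker.mpr (by rw [hc1, hz0, map_zero])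
    · simpa using zero_mem q
    · intro a b ha hb
      rw [map_add]
      exact add_mem ha hb
  have hq2 : ∀ y ∈ q, M.sq2 y ∈ q := by
    intro y hy
    rw [hqdef] at hy
    refine Submodule.iSup_induction (motive := fun y => M.sq2 y ∈ q) _ hy ?_ ?_ ?_
    · rintro k z ⟨hz1, hz2⟩
      refine hqle (k + 2) ⟨?_, M.sq2_gr _ _ hz2⟩
      have hz0 : π z = 0 := hz1
      exact LinearMap.mem_ker.mpr (by rw [hc2, hz0, map_zero])
    · simpa using zero_mem q
    · intro a b ha hb
      rw [map_add]
      exact add_mem ha hb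
  have hq3 : q = ⨆ k : ℤ, q ⊓ M.gr k := by
    apply le_antisymm
    · rw [hqdef]
      exact iSup_le fun k => le_iSup_of_le k (le_inf (hqle k) inf_le_right)
    · exact iSup_le fun k => inf_le_left
  have hp1 : ∀ y ∈ p, M.sq1 y ∈ p := by
    intro y hy
    rw [hpdef] at hy
    refine Submodule.span_induction (p := fun y _ => M.sq1 y ∈ p) ?_ ?_ ?_ ?_ hy
    · rintro _ ⟨⟨u, i⟩, rfl⟩
      fin_cases i
      · exact pm1
      · show M.sq1 (M.sq1 (x)) ∈ p
        rw [M.sq1_sq1]; exact zero_mem p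
      · exact pm3
      · show M.sq1 (M.sq1 (M.sq2 (x))) ∈ p
        rw [M.sq1_sq1]; exact zero_mem p
      · exact pm5
      · show M.sq1 (M.sq1 (M.sq2 (M.sq1 (x)))) ∈ p
        rw [M.sq1_sq1]; exact zero_mem p
      · exact pm7
      · show M.sq1 (M.sq1 (M.sq2 (M.sq1 (M.sq2 (x))))) ∈ p
        rw [M.sq1_sq1]; exact zero_mem p
    · simpa using zero_mem p
    · intro a b _ _ ha hb
      rw [map_add]
      exact add_mem ha hb
    · intro c a _ ha
      rw [map_smul]
      exact Submodule.smul_mem _ _ ha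
  have hp2 : ∀ y ∈ p, M.sq2 y ∈ p := by
    intro y hy
    rw [hpdef] at hy
    refine Submodule.span_induction (p := fun y _ => M.sq2 y ∈ p) ?_ ?_ ?_ ?_ hy
    · rintro _ ⟨⟨u, i⟩, rfl⟩
      fin_cases i
      · exact pm2
      · exact pm4
      · show M.sq2 (M.sq2 (x)) ∈ p
        rw [M.sq2_sq2]; exact pm5
      · exact pm6
      · show M.sq2 (M.sq2 (M.sq1 (x))) ∈ p
        rw [M.w_bba]; exact zero_mem p
      · show M.sq2 (M.sq1 (M.sq2 (M.sq1 (x)))) ∈ p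
        rw [M.w_baba]; exact pm7
      · show M.sq2 (M.sq2 (M.sq1 (M.sq2 (x)))) ∈ p
        rw [M.w_bba]; exact zero_mem p
      · show M.sq2 (M.sq1 (M.sq2 (M.sq1 (M.sq2 (x))))) ∈ p
        have h0 : M.sq2 (M.sq1 (M.sq2 (M.sq1 (M.sq2 (x))))) = 0 := by
          simp [M.sq1_sq1, M.sq2_sq2, M.w_bba, M.w_abb, M.w_baba]
        rw [h0]; exact zero_mem p
    · simpa using zero_mem p
    · intro a b _ _ ha hb
      rw [map_add]
      exact add_mem ha hb
    · intro c a _ ha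
      rw [map_smul]
      exact Submodule.smul_mem _ _ ha
  have hp3 : p = ⨆ k : ℤ, p ⊓ M.gr k := by
    apply le_antisymm
    · rw [hpdef, Submodule.span_le]
      rintro _ ⟨⟨u, i⟩, rfl⟩
      rw [SetLike.mem_coe]
      fin_cases i
      · exact Submodule.mem_iSup_of_mem 0 ⟨hgen 0, hx⟩
      · exact Submodule.mem_iSup_of_mem 1 ⟨hgen 1, d1⟩
      · exact Submodule.mem_iSup_of_mem 2 ⟨hgen 2, d2⟩
      · exact Submodule.mem_iSup_of_mem 3 ⟨hgen 3, d3⟩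
      · exact Submodule.mem_iSup_of_mem 3 ⟨hgen 4, d4⟩
      · exact Submodule.mem_iSup_of_mem 4 ⟨hgen 5, d5⟩
      · exact Submodule.mem_iSup_of_mem 5 ⟨hgen 6, d6⟩
      · exact Submodule.mem_iSup_of_mem 6 ⟨hgen 7, d7⟩
    · exact iSup_le fun k => inf_le_left
  have hpq : p ⊓ q = ⊥ := by
    rw [eq_bot_iff]
    rintro y ⟨h1, h2⟩
    have h3 : π y = 0 := LinearMap.mem_ker.mp (hqker h2)
    rw [hidp y h1] at h3
    simpa using h3
  have hpq2 : p ⊔ q = ⊤ := by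
    rw [eq_top_iff, ← M.total]
    refine iSup_le fun k => fun m hm => ?_
    have h2 : m - π m ∈ q := by
      refine hqle k ⟨?_, Submodule.sub_mem _ hm (hπgr k m hm)⟩
      exact LinearMap.mem_ker.mpr (by rw [map_sub, hidp (π m) (hπp m), sub_self])
    simpa using Submodule.add_mem_sup (hπp m) h2
  refine ⟨p, ⟨⟨hp1, hp2, hp3⟩, q, ⟨hq1, hq2, hq3⟩, hpq, hpq2⟩,
    ⟨Unit, fun _ => (0 : ℤ), fun _ => x, fun _ => hx, ?_, ?_⟩, pm0⟩
  · exact hli.comp (fun q : Unit × Fin 8 => q.2) fun q1 q2 h12 =>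
      Prod.ext (Subsingleton.elim _ _) h12
  · rw [hpdef]

/-- Lemma 3.4: in a reduced, connective, `Q₀`-local `A(1)`-module, any nonzero `x` of degree `0`
satisfies `Sq²Sq¹Sq² x ≠ 0` and `Sq¹Sq²Sq¹Sq² x = Sq²Sq¹Sq²Sq¹ x = 0`. -/
theorem lem_identities (M : A1Module) (hred : M.Reduced) (hloc : M.Q0Local)
    (hconn : ∀ k : ℤ, k < 0 → M.gr k = ⊥)
    (x : M.carrier) (hx : x ∈ M.gr 0) (hx0 : x ≠ 0) :
    M.sq2 (M.sq1 (M.sq2 x)) ≠ 0 ∧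
    M.sq1 (M.sq2 (M.sq1 (M.sq2 x))) = 0 ∧
    M.sq2 (M.sq1 (M.sq2 (M.sq1 x))) = 0 := by
  have hQ1app : ∀ y, M.Q1 y = M.sq1 (M.sq2 y) + M.sq2 (M.sq1 y) := fun y => by
    simp [A1Module.Q1]
  have hloc' : ∀ k : ℤ, k < 3 → ∀ y ∈ M.gr k, M.Q1 y = 0 → y = 0 := by
    intro k hk y hy hQ
    have h2 := hloc k ⟨LinearMap.mem_ker.mpr hQ, hy⟩
    rw [hconn (k - 3) (by omega), Submodule.map_bot] at h2
    simpa using h2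
  have h1 : M.sq1 (M.sq2 (M.sq1 (M.sq2 x))) = 0 := by
    by_contra hv
    obtain ⟨p, hsum, hfree, hxp⟩ := A1Module.free_summand M x hx hv
    rw [hred p hsum hfree] at hxp
    exact hx0 (by simpa using hxp)
  refine ⟨?_, h1, by rw [M.w_baba]; exact h1⟩
  intro h5
  have hb : M.sq2 x = 0 := by
    refine hloc' 2 (by norm_num) _ (M.mem_gr_of_eq (M.sq2_gr _ _ hx) (by norm_num)) ?_
    rw [hQ1app, M.w_abb, h5, add_zero]
  have ha : M.sq1 x = 0 := by
    refine hloc' 1 (by norm_num) _ (M.mem_gr_of_eq (M.sq1_gr _ _ hx) (by norm_num)) ?_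
    rw [hQ1app, M.sq1_sq1, map_zero, add_zero, ← M.sq2_sq2, hb, map_zero]
  have h0 : x = 0 := by
    refine hloc' 0 (by norm_num) _ hx ?_
    rw [hQ1app, hb, ha, map_zero, map_zero, add_zero]
  exact hx0 h0
end

section
/- Let M be a reduced Q_0-local A(1)-module with M_k = 0 for all k < 0. Then Sq^1 x = 0 for every x ∈ M_0. -/
namespace A1Lemma

open A1Module Submodule

variable {M : A1Module}

lemma addself (v : M.carrier) : v + v = 0 := by
  rw [← two_smul (ZMod 2) v, show (2 : ZMod 2) = 0 from rfl, zero_smul]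

lemma eq_of_add_eq_zero {a b : M.carrier} (h : a + b = 0) : a = b := by
  calc a = a + (b + b) := by rw [addself, add_zero]
  _ = (a + b) + b := (add_assoc a b b).symm
  _ = b := by rw [h, zero_add]

lemma Q1_apply (m : M.carrier) : M.Q1 m = M.sq1 (M.sq2 m) + M.sq2 (M.sq1 m) := rfl

lemma op2121 (m : M.carrier) :
    M.sq2 (M.sq1 (M.sq2 (M.sq1 m))) = M.sq1 (M.sq2 (M.sq1 (M.sq2 m))) := by
  rw [← M.sq2_sq2 m, M.sq2_sq2 (M.sq2 m)]

lemma op122 (m : M.carrier) : M.sq1 (M.sq2 (M.sq2 m)) = 0 := by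
  rw [M.sq2_sq2 m]; exact M.sq1_sq1 _

lemma op221 (m : M.carrier) : M.sq2 (M.sq2 (M.sq1 m)) = 0 := by
  rw [M.sq2_sq2 (M.sq1 m), M.sq1_sq1, map_zero, map_zero]

lemma hw0 (m : M.carrier) : M.w8 0 m = m := rfl
lemma hw1 (m : M.carrier) : M.w8 1 m = M.sq1 m := rfl
lemma hw2 (m : M.carrier) : M.w8 2 m = M.sq2 m := rfl
lemma hw3 (m : M.carrier) : M.w8 3 m = M.sq1 (M.sq2 m) := rfl
lemma hw4 (m : M.carrier) : M.w8 4 m = M.sq2 (M.sq1 m) := rfl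
lemma hw5 (m : M.carrier) : M.w8 5 m = M.sq1 (M.sq2 (M.sq1 m)) := rfl
lemma hw6 (m : M.carrier) : M.w8 6 m = M.sq2 (M.sq1 (M.sq2 m)) := rfl
lemma hw7 (m : M.carrier) : M.w8 7 m = M.sq1 (M.sq2 (M.sq1 (M.sq2 m))) := rfl

/-- degree of the `i`-th basis monomial of `A(1)` -/
def dg : Fin 8 → ℤ := ![0,1,2,3,3,4,5,6]

/-- the "dual basis" involution for the Frobenius pairing on `A(1)` -/
def du : Fin 8 → Fin 8 := ![7,6,5,3,4,2,1,0]

lemma dg0 : dg 0 = 0 := rfl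
lemma dg1 : dg 1 = 1 := rfl
lemma dg2 : dg 2 = 2 := rfl
lemma dg3 : dg 3 = 3 := rfl
lemma dg4 : dg 4 = 3 := rfl
lemma dg5 : dg 5 = 4 := rfl
lemma dg6 : dg 6 = 5 := rfl
lemma dg7 : dg 7 = 6 := rfl

lemma du0 : du 0 = 7 := rfl
lemma du1 : du 1 = 6 := rfl
lemma du2 : du 2 = 5 := rfl
lemma du3 : du 3 = 3 := rfl
lemma du4 : du 4 = 4 := rfl
lemma du5 : du 5 = 2 := rfl
lemma du6 : du 6 = 1 := rfl
lemma du7 : du 7 = 0 := rfl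

lemma gr_congr {k k' : ℤ} (h : k = k') {m : M.carrier} (hm : m ∈ M.gr k) : m ∈ M.gr k' := h ▸ hm

lemma w8_mem (a : Fin 8) (k : ℤ) (m : M.carrier) (hm : m ∈ M.gr k) :
    M.w8 a m ∈ M.gr (k + dg a) := by
  match a with
  | 0 => exact gr_congr (by rw [dg0]; ring) hm
  | 1 => exact gr_congr (by rw [dg1]) (M.sq1_gr k m hm)
  | 2 => exact gr_congr (by rw [dg2]) (M.sq2_gr k m hm)
  | 3 => exact gr_congr (by rw [dg3]; ring) (M.sq1_gr _ _ (M.sq2_gr k m hm))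
  | 4 => exact gr_congr (by rw [dg4]; ring) (M.sq2_gr _ _ (M.sq1_gr k m hm))
  | 5 => exact gr_congr (by rw [dg5]; ring) (M.sq1_gr _ _ (M.sq2_gr _ _ (M.sq1_gr k m hm)))
  | 6 => exact gr_congr (by rw [dg6]; ring) (M.sq2_gr _ _ (M.sq1_gr _ _ (M.sq2_gr k m hm)))
  | 7 => exact gr_congr (by rw [dg7]; ring) (M.sq1_gr _ _ (M.sq2_gr _ _ (M.sq1_gr _ _ (M.sq2_gr k m hm))))

end A1Lemma

namespace A1Lemma

open A1Module Submodule

variable {M : A1Module}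

lemma abba (a b : M.carrier) : ((a + b) + b) + a = 0 := by
  calc ((a + b) + b) + a = (a + (b + b)) + a := by rw [add_assoc a b b]
  _ = a + a := by rw [addself, add_zero]
  _ = 0 := addself a

lemma kerlow (hloc : M.Q0Local) (hconn : ∀ k : ℤ, k < 0 → M.gr k = ⊥)
    {k : ℤ} (hk : k ≤ 2) {m : M.carrier} (hm : m ∈ M.gr k) (hQ : M.Q1 m = 0) : m = 0 := by
  have h := hloc k (Submodule.mem_inf.2 ⟨LinearMap.mem_ker.2 hQ, hm⟩)
  rw [hconn (k - 3) (by omega), Submodule.map_bot, Submodule.mem_bot] at h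
  exact h

lemma degenerate (hloc : M.Q0Local) (hconn : ∀ k : ℤ, k < 0 → M.gr k = ⊥)
    {x : M.carrier} (hx : x ∈ M.gr 0)
    (htop : M.sq1 (M.sq2 (M.sq1 (M.sq2 x))) = 0) : M.sq1 x = 0 := by
  have hx1 : M.sq1 x ∈ M.gr 1 := gr_congr (by norm_num) (M.sq1_gr 0 x hx)
  have hx2 : M.sq2 x ∈ M.gr 2 := gr_congr (by norm_num) (M.sq2_gr 0 x hx)
  have h21 : M.sq2 (M.sq1 x) ∈ M.gr 3 := gr_congr (by norm_num) (M.sq2_gr 1 _ hx1)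
  have h12 : M.sq1 (M.sq2 x) ∈ M.gr 3 := gr_congr (by norm_num) (M.sq1_gr 2 _ hx2)
  -- Q1 of sq2 sq1 x vanishes
  have hQv : M.Q1 (M.sq2 (M.sq1 x)) = 0 := by
    rw [Q1_apply, op122, op2121, htop, add_zero]
  have h3v := hloc 3 (Submodule.mem_inf.2 ⟨LinearMap.mem_ker.2 hQv, h21⟩)
  rw [show (3:ℤ) - 3 = 0 by norm_num] at h3v
  obtain ⟨x', hx'0, hQx'⟩ := h3v
  -- Q1 of sq1 sq2 x vanishes
  have hQw : M.Q1 (M.sq1 (M.sq2 x)) = 0 := by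
    rw [Q1_apply, htop, M.sq1_sq1, map_zero, add_zero]
  have h3w := hloc 3 (Submodule.mem_inf.2 ⟨LinearMap.mem_ker.2 hQw, h12⟩)
  rw [show (3:ℤ) - 3 = 0 by norm_num] at h3w
  obtain ⟨x'', hx''0, hQx''⟩ := h3w
  -- x = x' + x''
  have hsum : M.Q1 (x + x' + x'') = 0 := by
    rw [map_add, map_add, hQx', hQx'', Q1_apply]
    exact abba _ _
  have hxsum : x + x' + x'' = 0 :=
    kerlow hloc hconn (by norm_num) (add_mem (add_mem hx hx'0) hx''0) hsum
  rw [add_assoc] at hxsum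
  have hxeq : x = x' + x'' := eq_of_add_eq_zero hxsum
  -- sq1 x'' = 0
  have h121'' : M.sq1 (M.sq2 (M.sq1 x'')) = 0 := by
    have h := congrArg M.sq1 hQx''
    rw [Q1_apply, map_add, M.sq1_sq1, M.sq1_sq1, zero_add] at h
    exact h
  have hs1x'' : M.sq1 x'' = 0 := by
    refine kerlow hloc hconn (k := 0 + 1) (by norm_num) (M.sq1_gr 0 x'' hx''0) ?_
    rw [Q1_apply, h121'', M.sq1_sq1, map_zero, add_zero]
  -- sq2 x' = 0
  have h212' : M.sq2 (M.sq1 (M.sq2 x')) = 0 := by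
    have h := congrArg M.sq2 hQx'
    rw [Q1_apply, map_add, op221 x', op221 x, add_zero] at h
    exact h
  have hs2x' : M.sq2 x' = 0 := by
    refine kerlow hloc hconn (k := 0 + 2) (by norm_num) (M.sq2_gr 0 x' hx'0) ?_
    rw [Q1_apply, op122, h212', add_zero]
  -- conclude
  have hz : M.Q1 (M.sq1 x) = 0 := by
    rw [Q1_apply, M.sq1_sq1, map_zero, add_zero, hxeq]
    simp only [map_add]
    rw [h121'', add_zero, ← M.sq2_sq2, hs2x', map_zero]
  exact kerlow hloc hconn (k := 0 + 1) (by norm_num) (M.sq1_gr 0 x hx) hz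

end A1Lemma

namespace A1Lemma

open A1Module Submodule

variable {M : A1Module}

lemma exists_lam {k0 : ℤ} {t : M.carrier} (ht : t ∈ M.gr k0) (hne : t ≠ 0) :
    ∃ lam : M.carrier →ₗ[ZMod 2] ZMod 2,
      lam t = 1 ∧ ∀ k : ℤ, k ≠ k0 → ∀ v ∈ M.gr k, lam v = 0 := by
  obtain ⟨C', hC'⟩ :=
    Submodule.exists_isCompl (Submodule.span (ZMod 2) {(⟨t, ht⟩ : M.gr k0)})
  set S : Submodule (ZMod 2) M.carrier := Submodule.span (ZMod 2) {t} with hS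
  set Cm : Submodule (ZMod 2) M.carrier :=
    (Submodule.span (ZMod 2) {(⟨t, ht⟩ : M.gr k0)}).map (M.gr k0).subtype with hCm0
  set Cc : Submodule (ZMod 2) M.carrier := C'.map (M.gr k0).subtype with hCc
  have hSmap : S = Cm := by
    rw [hS, hCm0, Submodule.map_span, Set.image_singleton]; rfl
  have hS6 : S ≤ M.gr k0 := Submodule.span_le.2 (Set.singleton_subset_iff.2 ht)
  have hCc6 : Cc ≤ M.gr k0 := Submodule.map_subtype_le _ _
  set R6 : Submodule (ZMod 2) M.carrier := ⨆ k : ℤ, ⨆ _ : k ≠ k0, M.gr k with hR6def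
  have hR6 : ∀ k : ℤ, k ≠ k0 → M.gr k ≤ R6 := fun k hk =>
    le_iSup_of_le k (le_iSup (fun _ : k ≠ k0 => M.gr k) hk)
  set U : Submodule (ZMod 2) M.carrier := Cc ⊔ R6 with hU
  have hdisj : Disjoint S U := by
    rw [Submodule.disjoint_def]
    intro m hmS hmU
    have hm6 : m ∈ M.gr k0 := hS6 hmS
    obtain ⟨c, hc, r, hr, hcr⟩ := Submodule.mem_sup.1 hmU
    have hr6 : r ∈ M.gr k0 := by
      have : r = m - c := eq_sub_of_add_eq' hcr
      rw [this]; exact sub_mem hm6 (hCc6 hc)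
    have hr0 : r = 0 := Submodule.disjoint_def.1 (M.indep k0) r hr6 hr
    have hmc : m ∈ Cc := by rw [← hcr, hr0, add_zero]; exact hc
    have hinf : S ⊓ Cc = ⊥ := by
      rw [hSmap, hCm0, hCc, ← Submodule.map_inf _ (Submodule.injective_subtype _),
        hC'.disjoint.eq_bot, Submodule.map_bot]
    have : m ∈ S ⊓ Cc := Submodule.mem_inf.2 ⟨hmS, hmc⟩
    rw [hinf] at this
    exact this
  have hcodis : Codisjoint S U := by
    rw [codisjoint_iff, eq_top_iff, ← M.total]
    refine iSup_le fun k => ?_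
    by_cases hk : k = k0
    · subst hk
      have hgr : M.gr k = S ⊔ Cc := by
        rw [hSmap, hCm0, hCc, ← Submodule.map_sup, hC'.codisjoint.eq_top,
          Submodule.map_subtype_top]
      rw [hgr]
      exact sup_le_sup le_rfl le_sup_left
    · exact le_trans (hR6 k hk) (le_trans le_sup_right le_sup_right)
  have hcompl : IsCompl S U := ⟨hdisj, hcodis⟩
  refine ⟨((LinearEquiv.toSpanNonzeroSingleton (ZMod 2) M.carrier t hne).symm.toLinearMap).comp
    (S.linearProjOfIsCompl U hcompl), ?_, ?_⟩
  · have h1 : S.linearProjOfIsCompl U hcompl t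
        = ⟨t, Submodule.mem_span_singleton_self t⟩ :=
      Submodule.linearProjOfIsCompl_apply_left hcompl ⟨t, Submodule.mem_span_singleton_self t⟩
    rw [LinearMap.comp_apply, h1, LinearEquiv.coe_toLinearMap, LinearEquiv.symm_apply_eq,
      LinearEquiv.toSpanNonzeroSingleton_one]
  · intro k hk v hv
    have hvU : v ∈ U := Submodule.mem_sup_right (hR6 k hk hv)
    have h0 : S.linearProjOfIsCompl U hcompl v = 0 :=
      Submodule.linearProjOfIsCompl_apply_right hcompl ⟨v, hvU⟩
    rw [LinearMap.comp_apply, h0, map_zero]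

end A1Lemma

namespace A1Lemma

open A1Module Submodule

variable {M : A1Module}

lemma dudu : ∀ j : Fin 8, du (du j) = j := by decide

lemma free_case (hred : M.Reduced) {x : M.carrier} (hx : x ∈ M.gr 0)
    (htop : M.sq1 (M.sq2 (M.sq1 (M.sq2 x))) ≠ 0) : M.sq1 x = 0 := by
  have hθ6 : M.sq1 (M.sq2 (M.sq1 (M.sq2 x))) ∈ M.gr 6 := by
    have := w8_mem 7 0 x hx
    rw [hw7, dg7, zero_add] at this
    exact this
  obtain ⟨lam, lam_t, lam_gr⟩ := exists_lam hθ6 htop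
  have lam_t2 : lam (M.sq2 (M.sq1 (M.sq2 (M.sq1 x)))) = 1 := by rw [op2121]; exact lam_t
  have sp1 : lam (M.sq1 (M.sq2 (M.sq2 (M.sq1 x)))) = 0 := by rw [op221, map_zero, map_zero]
  have sp2 : lam (M.sq2 (M.sq1 (M.sq1 (M.sq2 x)))) = 0 := by
    rw [M.sq1_sq1, map_zero, map_zero]
  have hej : ∀ j : Fin 8, M.w8 j x ∈ M.gr (dg j) := by
    intro j
    have := w8_mem j 0 x hx
    rwa [zero_add] at this
  -- the Frobenius-pairing table
  have htab : ∀ a j : Fin 8, lam (M.w8 a (M.w8 j x)) = if j = du a then 1 else 0 := by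
    intro a j
    fin_cases a <;> fin_cases j <;>
      first
      | (rw [if_pos (by decide)]; first | exact lam_t | exact lam_t2)
      | (rw [if_neg (by decide)];
         first
         | exact sp1
         | exact sp2
         | exact lam_gr _ (by decide) _ (w8_mem _ _ _ (w8_mem _ 0 x hx)))
  have key : ∀ (c : Fin 8 → ZMod 2) (a : Fin 8),
      lam (M.w8 a (∑ j : Fin 8, c j • M.w8 j x)) = c (du a) := by
    intro c a
    simp only [map_sum, map_smul, htab, smul_eq_mul, mul_ite, mul_one, mul_zero,
      Finset.sum_ite_eq', Finset.mem_univ, if_true]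
  have key2 : ∀ (c : Fin 8 → ZMod 2) (m : M.carrier),
      (∑ j : Fin 8, c j • M.w8 j x = m) → ∀ a : Fin 8, lam (M.w8 a m) = c (du a) := by
    intro c m hm a
    rw [← hm]
    exact key c a
  set p : Submodule (ZMod 2) M.carrier :=
    Submodule.span (ZMod 2) (Set.range fun q : PUnit × Fin 8 => M.w8 q.2 x) with hp
  have hep : ∀ j : Fin 8, M.w8 j x ∈ p :=
    fun j => Submodule.subset_span ⟨(PUnit.unit, j), rfl⟩
  set qq : Submodule (ZMod 2) M.carrier :=
    ⨅ i : Fin 8, LinearMap.ker (lam ∘ₗ (M.w8 i)) with hqq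
  have hqmem : ∀ m : M.carrier, m ∈ qq ↔ ∀ i : Fin 8, lam (M.w8 i m) = 0 := by
    intro m
    simp [hqq, Submodule.mem_iInf, LinearMap.mem_ker]
  -- closure of p
  have hp1 : ∀ m ∈ p, M.sq1 m ∈ p := by
    intro m hm
    have hle : p ≤ Submodule.comap M.sq1 p := by
      rw [hp, Submodule.span_le]
      rintro _ ⟨⟨u, j⟩, rfl⟩
      simp only [Submodule.mem_comap]
      fin_cases j
      · exact hep 1
      · show M.sq1 (M.sq1 x) ∈ p
        rw [M.sq1_sq1]; exact zero_mem p
      · exact hep 3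
      · show M.sq1 (M.sq1 (M.sq2 x)) ∈ p
        rw [M.sq1_sq1]; exact zero_mem p
      · exact hep 5
      · show M.sq1 (M.sq1 (M.sq2 (M.sq1 x))) ∈ p
        rw [M.sq1_sq1]; exact zero_mem p
      · exact hep 7
      · show M.sq1 (M.sq1 (M.sq2 (M.sq1 (M.sq2 x)))) ∈ p
        rw [M.sq1_sq1]; exact zero_mem p
    exact hle hm
  have hp2 : ∀ m ∈ p, M.sq2 m ∈ p := by
    intro m hm
    have hle : p ≤ Submodule.comap M.sq2 p := by
      rw [hp, Submodule.span_le]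
      rintro _ ⟨⟨u, j⟩, rfl⟩
      simp only [Submodule.mem_comap]
      fin_cases j
      · exact hep 2
      · exact hep 4
      · show M.sq2 (M.sq2 x) ∈ p
        rw [M.sq2_sq2]; exact hep 5
      · exact hep 6
      · show M.sq2 (M.sq2 (M.sq1 x)) ∈ p
        rw [op221]; exact zero_mem p
      · show M.sq2 (M.sq1 (M.sq2 (M.sq1 x))) ∈ p
        rw [op2121]; exact hep 7
      · show M.sq2 (M.sq2 (M.sq1 (M.sq2 x))) ∈ p
        rw [op221]; exact zero_mem p
      · show M.sq2 (M.sq1 (M.sq2 (M.sq1 (M.sq2 x)))) ∈ p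
        rw [op2121, op122, map_zero, map_zero]; exact zero_mem p
    exact hle hm
  have hpgr : p = ⨆ k : ℤ, p ⊓ M.gr k := by
    refine le_antisymm ?_ (iSup_le fun k => inf_le_left)
    rw [hp, Submodule.span_le]
    rintro _ ⟨⟨u, j⟩, rfl⟩
    exact Submodule.mem_iSup_of_mem (dg j) (Submodule.mem_inf.2 ⟨hep j, hej j⟩)
  -- closure of qq
  have hq1 : ∀ m ∈ qq, M.sq1 m ∈ qq := by
    intro m hm
    rw [hqmem] at hm ⊢
    intro i
    fin_cases i
    · exact hm 1
    · show lam (M.sq1 (M.sq1 m)) = 0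
      rw [M.sq1_sq1, map_zero]
    · exact hm 4
    · exact hm 5
    · show lam (M.sq2 (M.sq1 (M.sq1 m))) = 0
      rw [M.sq1_sq1, map_zero, map_zero]
    · show lam (M.sq1 (M.sq2 (M.sq1 (M.sq1 m)))) = 0
      rw [M.sq1_sq1, map_zero, map_zero, map_zero]
    · show lam (M.sq2 (M.sq1 (M.sq2 (M.sq1 m)))) = 0
      rw [op2121]; exact hm 7
    · show lam (M.sq1 (M.sq2 (M.sq1 (M.sq2 (M.sq1 m))))) = 0
      rw [op2121, M.sq1_sq1, map_zero]
  have hq2 : ∀ m ∈ qq, M.sq2 m ∈ qq := by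
    intro m hm
    rw [hqmem] at hm ⊢
    intro i
    fin_cases i
    · exact hm 2
    · exact hm 3
    · show lam (M.sq2 (M.sq2 m)) = 0
      rw [M.sq2_sq2]; exact hm 5
    · show lam (M.sq1 (M.sq2 (M.sq2 m))) = 0
      rw [op122, map_zero]
    · exact hm 6
    · exact hm 7
    · show lam (M.sq2 (M.sq1 (M.sq2 (M.sq2 m)))) = 0
      rw [M.sq2_sq2 m, M.sq1_sq1, map_zero, map_zero]
    · show lam (M.sq1 (M.sq2 (M.sq1 (M.sq2 (M.sq2 m))))) = 0
      rw [M.sq2_sq2 m, M.sq1_sq1, map_zero, map_zero, map_zero]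
  have hqgr : qq = ⨆ k : ℤ, qq ⊓ M.gr k := by
    refine le_antisymm ?_ (iSup_le fun k => inf_le_left)
    intro m hm
    have hmT : m ∈ ⨆ k : ℤ, M.gr k := by rw [M.total]; trivial
    obtain ⟨f, hf, hfs⟩ := (Submodule.mem_iSup_iff_exists_finsupp _ _).1 hmT
    have hcomp : ∀ k : ℤ, f k ∈ qq := by
      intro k
      rw [hqmem]
      intro i
      by_cases hk : k + dg i = 6
      · have h0 : lam (M.w8 i m) = 0 := (hqmem m).1 hm i
        rw [← hfs, Finsupp.sum, map_sum, map_sum] at h0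
        by_cases hks : k ∈ f.support
        · rw [Finset.sum_eq_single_of_mem k hks ?side] at h0
          · exact h0
          case side =>
            intro k' _ hne
            refine lam_gr _ ?_ _ (w8_mem i k' _ (hf k'))
            omega
        · rw [Finsupp.notMem_support_iff.1 hks, map_zero, map_zero]
      · exact lam_gr _ hk _ (w8_mem i k _ (hf k))
    rw [← hfs, Finsupp.sum]
    exact Submodule.sum_mem _ fun k _ =>
      Submodule.mem_iSup_of_mem k (Submodule.mem_inf.2 ⟨hcomp k, hf k⟩)
  -- p ⊓ qq = ⊥
  have hinfpq : p ⊓ qq = ⊥ := by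
    rw [eq_bot_iff]
    intro m hm
    obtain ⟨hmp, hmq⟩ := Submodule.mem_inf.1 hm
    rw [hp, mem_span_range_iff_exists_fun (ZMod 2)] at hmp
    obtain ⟨c, hc⟩ := hmp
    have hc8 : ∑ j : Fin 8, (fun j => c (PUnit.unit, j)) j • M.w8 j x = m := by
      rw [← hc, Fintype.sum_prod_type]
      exact (Fintype.sum_unique (fun u : PUnit => ∑ j : Fin 8, c (u, j) • M.w8 j x)).symm
    have hz : ∀ j : Fin 8, c (PUnit.unit, j) = 0 := by
      intro j
      have h := key2 _ m hc8 (du j)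
      rw [dudu] at h
      rw [← h]
      exact (hqmem m).1 hmq (du j)
    rw [Submodule.mem_bot, ← hc8]
    simp only [hz, zero_smul, Finset.sum_const_zero]
  -- p ⊔ qq = ⊤
  have hsuppq : p ⊔ qq = ⊤ := by
    rw [eq_top_iff]
    intro m _
    have hvp : (∑ j : Fin 8, lam (M.w8 (du j) m) • M.w8 j x) ∈ p :=
      Submodule.sum_mem _ fun j _ => Submodule.smul_mem _ _ (hep j)
    have hwq : m - ∑ j : Fin 8, lam (M.w8 (du j) m) • M.w8 j x ∈ qq := by
      rw [hqmem]
      intro i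
      rw [map_sub, map_sub, key (fun j => lam (M.w8 (du j) m)) i]
      simp only [dudu, sub_self]
    exact Submodule.mem_sup.2 ⟨_, hvp, _, hwq, add_sub_cancel _ _⟩
  have hsummand : M.IsSummand p := ⟨⟨hp1, hp2, hpgr⟩, qq, ⟨hq1, hq2, hqgr⟩, hinfpq, hsuppq⟩
  have hLI : LinearIndependent (ZMod 2)
      (fun q : PUnit × Fin 8 => M.w8 q.2 ((fun _ : PUnit => x) q.1)) := by
    rw [Fintype.linearIndependent_iff]
    intro g hg
    have hg8 : ∑ j : Fin 8, (fun j => g (PUnit.unit, j)) j • M.w8 j x = 0 := by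
      rw [← hg, Fintype.sum_prod_type]
      exact (Fintype.sum_unique (fun u : PUnit => ∑ j : Fin 8, g (u, j) • M.w8 j x)).symm
    rintro ⟨u, j⟩
    have h := key2 _ 0 hg8 (du j)
    rw [dudu, map_zero, map_zero] at h
    exact h.symm
  have hfree : M.IsFreeOn p :=
    ⟨PUnit, fun _ => 0, fun _ => x, fun _ => hx, hLI, rfl⟩
  have hbot : p = ⊥ := hred p hsummand hfree
  have hx0 : x = 0 := by
    have : x ∈ p := hep 0
    rw [hbot, Submodule.mem_bot] at this
    exact this
  rw [hx0, map_zero]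

end A1Lemma

/-- Lemma 3.5: in a reduced, connective, `Q₀`-local `A(1)`-module, `Sq¹ x = 0` for every
`x` of degree `0`. -/
theorem lem_sq1_eq_zero (M : A1Module) (hred : M.Reduced) (hloc : M.Q0Local)
    (hconn : ∀ k : ℤ, k < 0 → M.gr k = ⊥) :
    ∀ x ∈ M.gr 0, M.sq1 x = 0 := by
  intro x hx
  by_cases htop : M.sq1 (M.sq2 (M.sq1 (M.sq2 x))) = 0
  · exact A1Lemma.degenerate hloc hconn hx htop
  · exact A1Lemma.free_case hred hx htop
end

section
/- If N is a flock of seagulls, then in N the intersection of the image of Sq^2 with the kernel of Sq^1 equals the image of Sq^2 Sq^1 Sq^2, i.e., im(Sq^2) ∩ ker(Sq^1) = im(Sq^2 Sq^1 Sq^2). -/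
/-- Lemma 3.6: in a flock of seagulls, `im(Sq²) ∩ ker(Sq¹) = im(Sq²Sq¹Sq²)`. -/
theorem lem_ker1_im2 (N : A1Module) (h : N.IsFlock) :
    LinearMap.range N.sq2 ⊓ LinearMap.ker N.sq1 =
      LinearMap.range (N.sq2 ∘ₗ N.sq1 ∘ₗ N.sq2) := by
  classical
  obtain ⟨I, α, n, hn, y, hgr, h0, hrec, hli, hspan⟩ := h
  have hb : ⊤ ≤ Submodule.span (ZMod 2)
      (Set.range fun q : {x : I × ℕ // (x.2 : ℕ∞) < n x.1} × Fin 4 =>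
        N.w4 q.2 (y q.1.1.1 q.1.1.2)) := hspan.ge
  let b : Module.Basis ({x : I × ℕ // (x.2 : ℕ∞) < n x.1} × Fin 4) (ZMod 2) N.carrier :=
    Module.Basis.mk hli hb
  have hbq : ∀ q, b q = N.w4 q.2 (y q.1.1.1 q.1.1.2) := Module.Basis.mk_apply hli hb
  have hA : ∀ a : {x : I × ℕ // (x.2 : ℕ∞) < n x.1},
      N.sq1 (N.sq2 (N.sq1 (y a.1.1 a.1.2))) = 0 := by
    rintro ⟨⟨i, j⟩, ha⟩
    rcases j with _ | j'
    · rw [h0 i, map_zero, map_zero]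
    · rw [hrec i j' ha, N.sq2_sq2, N.sq1_sq1]
  have hK : ∀ a : {x : I × ℕ // (x.2 : ℕ∞) < n x.1},
      N.sq1 (N.sq2 (N.sq1 (N.sq2 (y a.1.1 a.1.2)))) = 0 := by
    intro a
    rw [← N.sq2_sq2 (N.sq2 (y a.1.1 a.1.2)), N.sq2_sq2 (y a.1.1 a.1.2), hA a, map_zero]
  let g1 : {x : I × ℕ // (x.2 : ℕ∞) < n x.1} × Fin 4 → N.carrier :=
    fun q => if q.2 = 2 then y q.1.1.1 q.1.1.2 else 0
  let g2 : {x : I × ℕ // (x.2 : ℕ∞) < n x.1} × Fin 4 → N.carrier :=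
    fun q => if q.2 = 2 then N.sq2 (y q.1.1.1 q.1.1.2) else 0
  let P := b.constr ℕ g1
  let R := b.constr ℕ g2
  have hP : ∀ q, P (b q) = g1 q := fun q => b.constr_basis ℕ g1 q
  have hR : ∀ q, R (b q) = g2 q := fun q => b.constr_basis ℕ g2 q
  have identA : N.sq1 ∘ₗ (N.sq2 ∘ₗ N.sq1 ∘ₗ N.sq2) = 0 := by
    apply b.ext
    rintro ⟨a, k⟩
    simp only [LinearMap.comp_apply, LinearMap.zero_apply]
    rw [hbq]
    fin_cases k
    · exact hK a
    · show N.sq1 (N.sq2 (N.sq1 (N.sq2 (N.sq2 (y a.1.1 a.1.2))))) = 0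
      rw [N.sq2_sq2 (y a.1.1 a.1.2), hA a, map_zero, map_zero, map_zero]
    · show N.sq1 (N.sq2 (N.sq1 (N.sq2 (N.sq1 (N.sq2 (y a.1.1 a.1.2)))))) = 0
      rw [hK a, map_zero, map_zero]
    · show N.sq1 (N.sq2 (N.sq1 (N.sq2 (N.sq2 (N.sq1 (N.sq2 (y a.1.1 a.1.2))))))) = 0
      rw [N.sq2_sq2 (N.sq1 (N.sq2 (y a.1.1 a.1.2))), N.sq1_sq1, map_zero, map_zero]
  have identB : N.sq2 = (N.sq2 ∘ₗ N.sq1 ∘ₗ N.sq2) ∘ₗ P + R ∘ₗ (N.sq1 ∘ₗ N.sq2) := by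
    apply b.ext
    rintro ⟨a, k⟩
    simp only [LinearMap.comp_apply, LinearMap.add_apply]
    fin_cases k
    · -- k = 0
      show N.sq2 (b (a, 0)) =
        N.sq2 (N.sq1 (N.sq2 (P (b (a, 0))))) + R (N.sq1 (N.sq2 (b (a, 0))))
      have ht : N.sq1 (N.sq2 (b (a, 0))) = b (a, 2) := by
        rw [hbq (a, 0), hbq (a, 2)]; rfl
      rw [hP (a, 0), ht, hR (a, 2)]
      show N.sq2 (b (a, 0)) = N.sq2 (N.sq1 (N.sq2 0)) + N.sq2 (y a.1.1 a.1.2)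
      rw [hbq (a, 0)]
      show N.sq2 (y a.1.1 a.1.2) = N.sq2 (N.sq1 (N.sq2 0)) + N.sq2 (y a.1.1 a.1.2)
      simp
    · -- k = 1
      show N.sq2 (b (a, 1)) =
        N.sq2 (N.sq1 (N.sq2 (P (b (a, 1))))) + R (N.sq1 (N.sq2 (b (a, 1))))
      rw [hP (a, 1)]
      rw [hbq (a, 1)]
      show N.sq2 (N.sq2 (y a.1.1 a.1.2)) =
        N.sq2 (N.sq1 (N.sq2 (g1 (a, 1)))) + R (N.sq1 (N.sq2 (N.sq2 (y a.1.1 a.1.2))))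
      have h1 : N.sq2 (N.sq2 (y a.1.1 a.1.2)) = 0 := by
        rw [N.sq2_sq2, hA a]
      rw [h1]
      simp [g1]
    · -- k = 2
      show N.sq2 (b (a, 2)) =
        N.sq2 (N.sq1 (N.sq2 (P (b (a, 2))))) + R (N.sq1 (N.sq2 (b (a, 2))))
      rw [hP (a, 2)]
      rw [hbq (a, 2)]
      show N.sq2 (N.sq1 (N.sq2 (y a.1.1 a.1.2))) =
        N.sq2 (N.sq1 (N.sq2 (y a.1.1 a.1.2))) +
          R (N.sq1 (N.sq2 (N.sq1 (N.sq2 (y a.1.1 a.1.2)))))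
      rw [hK a]
      simp
    · -- k = 3
      show N.sq2 (b (a, 3)) =
        N.sq2 (N.sq1 (N.sq2 (P (b (a, 3))))) + R (N.sq1 (N.sq2 (b (a, 3))))
      rw [hP (a, 3)]
      rw [hbq (a, 3)]
      show N.sq2 (N.sq2 (N.sq1 (N.sq2 (y a.1.1 a.1.2)))) =
        N.sq2 (N.sq1 (N.sq2 (g1 (a, 3)))) +
          R (N.sq1 (N.sq2 (N.sq2 (N.sq1 (N.sq2 (y a.1.1 a.1.2))))))
      have h1 : N.sq2 (N.sq2 (N.sq1 (N.sq2 (y a.1.1 a.1.2)))) = 0 := by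
        rw [N.sq2_sq2, N.sq1_sq1, map_zero, map_zero]
      rw [h1]
      simp [g1]
  apply le_antisymm
  · rintro z hz
    obtain ⟨⟨x, rfl⟩, hz1⟩ := Submodule.mem_inf.mp hz
    have hT : N.sq1 (N.sq2 x) = 0 := hz1
    have hx := LinearMap.congr_fun identB x
    simp only [LinearMap.add_apply, LinearMap.comp_apply, hT, map_zero, add_zero] at hx
    exact ⟨P x, hx.symm⟩
  · rintro z ⟨x, rfl⟩
    refine Submodule.mem_inf.mpr ⟨⟨N.sq1 (N.sq2 x), rfl⟩, ?_⟩
    exact LinearMap.congr_fun identA x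
end

section
/- Let M be a reduced, finite, Q_0-local A(1)-module with M_k = 0 for all k < 0, and let B be an F_2-basis of M_0. Then the A(1)-module map ⊕_{b∈B} Υ_1{y_b} → M sending the generator y_b to b is injective with image M^0; in particular, M^0 is isomorphic to a direct sum of copies of Υ_1, one for each element of B. -/
lemma zmod2_eq_one : ∀ u : ZMod 2, u ≠ 0 → u = 1 := by decide

lemma zmod2_add_self : ∀ u : ZMod 2, u + u = 0 := by decide

namespace A1Module

variable (M : A1Module)

/-! ### Evaluation lemmas for the monomial families -/

@[simp] lemma w8_0 (v : M.carrier) : M.w8 0 v = v := rfl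
@[simp] lemma w8_1 (v : M.carrier) : M.w8 1 v = M.sq1 v := rfl
@[simp] lemma w8_2 (v : M.carrier) : M.w8 2 v = M.sq2 v := rfl
@[simp] lemma w8_3 (v : M.carrier) : M.w8 3 v = M.sq1 (M.sq2 v) := rfl
@[simp] lemma w8_4 (v : M.carrier) : M.w8 4 v = M.sq2 (M.sq1 v) := rfl
@[simp] lemma w8_5 (v : M.carrier) : M.w8 5 v = M.sq1 (M.sq2 (M.sq1 v)) := rfl
@[simp] lemma w8_6 (v : M.carrier) : M.w8 6 v = M.sq2 (M.sq1 (M.sq2 v)) := rfl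
@[simp] lemma w8_7 (v : M.carrier) : M.w8 7 v = M.sq1 (M.sq2 (M.sq1 (M.sq2 v))) := rfl

@[simp] lemma w4_0 (v : M.carrier) : M.w4 0 v = v := rfl
@[simp] lemma w4_1 (v : M.carrier) : M.w4 1 v = M.sq2 v := rfl
@[simp] lemma w4_2 (v : M.carrier) : M.w4 2 v = M.sq1 (M.sq2 v) := rfl
@[simp] lemma w4_3 (v : M.carrier) : M.w4 3 v = M.sq2 (M.sq1 (M.sq2 v)) := rfl

/-- degrees of the eight monomials -/
def deg8 : Fin 8 → ℤ := ![0, 1, 2, 3, 3, 4, 5, 6]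

@[simp] lemma deg8_0 : deg8 0 = 0 := rfl
@[simp] lemma deg8_1 : deg8 1 = 1 := rfl
@[simp] lemma deg8_2 : deg8 2 = 2 := rfl
@[simp] lemma deg8_3 : deg8 3 = 3 := rfl
@[simp] lemma deg8_4 : deg8 4 = 3 := rfl
@[simp] lemma deg8_5 : deg8 5 = 4 := rfl
@[simp] lemma deg8_6 : deg8 6 = 5 := rfl
@[simp] lemma deg8_7 : deg8 7 = 6 := rfl

/-- the duality pairing involution on the monomial basis of `A(1)` -/
def sig8 : Fin 8 → Fin 8 := ![7, 6, 5, 3, 4, 2, 1, 0]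

@[simp] lemma sig8_0 : sig8 0 = 7 := rfl
@[simp] lemma sig8_1 : sig8 1 = 6 := rfl
@[simp] lemma sig8_2 : sig8 2 = 5 := rfl
@[simp] lemma sig8_3 : sig8 3 = 3 := rfl
@[simp] lemma sig8_4 : sig8 4 = 4 := rfl
@[simp] lemma sig8_5 : sig8 5 = 2 := rfl
@[simp] lemma sig8_6 : sig8 6 = 1 := rfl
@[simp] lemma sig8_7 : sig8 7 = 0 := rfl

/-! ### Basic operator identities -/

lemma q1_apply (v : M.carrier) : M.Q1 v = M.sq1 (M.sq2 v) + M.sq2 (M.sq1 v) := rfl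

lemma top1 (v : M.carrier) :
    M.sq2 (M.sq1 (M.sq2 (M.sq1 v))) = M.sq1 (M.sq2 (M.sq1 (M.sq2 v))) := by
  rw [← M.sq2_sq2 v, M.sq2_sq2 (M.sq2 v)]

lemma z1 (v : M.carrier) : M.sq1 (M.sq2 (M.sq2 (M.sq1 v))) = 0 := by
  rw [M.sq2_sq2 (M.sq1 v)]
  exact M.sq1_sq1 _

lemma z2 (v : M.carrier) : M.sq2 (M.sq1 (M.sq1 (M.sq2 v))) = 0 := by
  rw [M.sq1_sq1, map_zero]

lemma addself (v : M.carrier) : v + v = 0 := by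
  rw [← two_smul (ZMod 2) v, show (2 : ZMod 2) = 0 by decide, zero_smul]

lemma eq_of_addzero {a b : M.carrier} (h : a + b = 0) : a = b := by
  have h2 : a + (b + b) = b := by rw [← add_assoc, h, zero_add]
  rwa [M.addself b, add_zero] at h2

/-! ### The grading -/

lemma gr_cast {a b : ℤ} (h : a = b) {v : M.carrier} (hv : v ∈ M.gr a) : v ∈ M.gr b := h ▸ hv

lemma isCompl_gr (d : ℤ) : IsCompl (M.gr d) (⨆ j, ⨆ _ : j ≠ d, M.gr j) := by
  refine ⟨M.indep d, codisjoint_iff.mpr ?_⟩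
  rw [← top_le_iff, ← M.total]
  refine iSup_le fun j => ?_
  by_cases h : j = d
  · subst h; exact le_sup_left
  · exact le_trans (le_iSup_of_le j (le_iSup (fun _ : j ≠ d => M.gr j) h)) le_sup_right

noncomputable def proj (d : ℤ) : M.carrier →ₗ[ZMod 2] ↥(M.gr d) :=
  (M.gr d).linearProjOfIsCompl _ (M.isCompl_gr d)

lemma proj_same (d : ℤ) {v : M.carrier} (hv : v ∈ M.gr d) : M.proj d v = ⟨v, hv⟩ :=
  Submodule.linearProjOfIsCompl_apply_left (M.isCompl_gr d) ⟨v, hv⟩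

lemma proj_ne {d' : ℤ} (d : ℤ) (h : d' ≠ d) {v : M.carrier} (hv : v ∈ M.gr d') :
    M.proj d v = 0 := by
  have hv' : v ∈ ⨆ j, ⨆ _ : j ≠ d, M.gr j := SetLike.le_def.mp (le_iSup_of_le (f := fun j => ⨆ _ : j ≠ d, M.gr j) d' (le_iSup (fun _ : d' ≠ d => M.gr d') h)) hv
  exact Submodule.linearProjOfIsCompl_apply_right (M.isCompl_gr d) ⟨v, hv'⟩

lemma mem_w8 (i : Fin 8) {d : ℤ} {v : M.carrier} (hv : v ∈ M.gr d) :
    M.w8 i v ∈ M.gr (d + deg8 i) := by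
  fin_cases i <;>
    simp only [Fin.reduceFinMk, Fin.isValue, w8_0, w8_1, w8_2, w8_3, w8_4, w8_5, w8_6, w8_7,
      deg8_0, deg8_1, deg8_2, deg8_3, deg8_4, deg8_5, deg8_6, deg8_7]
  · exact M.gr_cast (by ring) hv
  · exact M.gr_cast (by ring) (M.sq1_gr _ _ hv)
  · exact M.gr_cast (by ring) (M.sq2_gr _ _ hv)
  · exact M.gr_cast (by ring) (M.sq1_gr _ _ (M.sq2_gr _ _ hv))
  · exact M.gr_cast (by ring) (M.sq2_gr _ _ (M.sq1_gr _ _ hv))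
  · exact M.gr_cast (by ring) (M.sq1_gr _ _ (M.sq2_gr _ _ (M.sq1_gr _ _ hv)))
  · exact M.gr_cast (by ring) (M.sq2_gr _ _ (M.sq1_gr _ _ (M.sq2_gr _ _ hv)))
  · exact M.gr_cast (by ring) (M.sq1_gr _ _ (M.sq2_gr _ _ (M.sq1_gr _ _ (M.sq2_gr _ _ hv))))

/-! ### Locality consequences -/

lemma loc_low (hloc : M.Q0Local) (hconn : ∀ k : ℤ, k < 0 → M.gr k = ⊥)
    {k : ℤ} {v : M.carrier} (hv : v ∈ M.gr k) (hk : k ≤ 2) (hq : M.Q1 v = 0) : v = 0 := by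
  have h := hloc k (Submodule.mem_inf.mpr ⟨LinearMap.mem_ker.mpr hq, hv⟩)
  rw [hconn (k - 3) (by omega), Submodule.map_bot] at h
  simpa using h

lemma loc_ex (hloc : M.Q0Local) {k : ℤ} {v : M.carrier} (hv : v ∈ M.gr k)
    (hq : M.Q1 v = 0) : ∃ s ∈ M.gr (k - 3), M.Q1 s = v := by
  have h := hloc k (Submodule.mem_inf.mpr ⟨LinearMap.mem_ker.mpr hq, hv⟩)
  exact Submodule.mem_map.mp h

/-! ### The duality pairing computation -/

lemma pairing (f : M.carrier →ₗ[ZMod 2] (ZMod 2)) {k : ℤ} {x : M.carrier} (hx : x ∈ M.gr k)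
    (hf1 : f (M.sq1 (M.sq2 (M.sq1 (M.sq2 x)))) = 1)
    (hfne : ∀ {d : ℤ} {v : M.carrier}, v ∈ M.gr d → d ≠ k + 6 → f v = 0)
    (j i : Fin 8) : f (M.w8 j (M.w8 i x)) = if j = sig8 i then 1 else 0 := by
  have hfact : ∀ i : Fin 8, deg8 (sig8 i) + deg8 i = 6 := by decide
  by_cases hdeg : deg8 j + deg8 i = 6
  · fin_cases j <;> fin_cases i <;>
      simp only [Fin.reduceFinMk, Fin.isValue, deg8_0, deg8_1, deg8_2, deg8_3, deg8_4, deg8_5, deg8_6, deg8_7,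
        sig8_0, sig8_1, sig8_2, sig8_3, sig8_4, sig8_5, sig8_6, sig8_7,
        w8_0, w8_1, w8_2, w8_3, w8_4, w8_5, w8_6, w8_7, if_true, if_false,
        reduceCtorEq, reduceIte] at hdeg ⊢ <;>
      first
        | omega
        | exact hf1
        | (rw [M.top1]; exact hf1)
        | (rw [M.z1]; exact map_zero f)
        | (rw [M.z2]; exact map_zero f)
  · rw [if_neg (fun h => hdeg (by rw [h]; exact hfact i))]
    exact hfne (M.mem_w8 _ (M.mem_w8 _ hx)) (by omega)

/-! ### The key lemma: the top class of `A(1)` acts trivially on a reduced module -/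

lemma theta_zero (hred : M.Reduced) {k : ℤ} {x : M.carrier} (hx : x ∈ M.gr k) :
    M.sq1 (M.sq2 (M.sq1 (M.sq2 x))) = 0 := by
  classical
  by_contra hne
  haveI : Fact (Nat.Prime 2) := ⟨Nat.prime_two⟩
  have htmem : M.sq1 (M.sq2 (M.sq1 (M.sq2 x))) ∈ M.gr (k + 6) :=
    M.gr_cast (by ring) (M.sq1_gr _ _ (M.sq2_gr _ _ (M.sq1_gr _ _ (M.sq2_gr _ _ hx))))
  obtain ⟨g0, hg0⟩ : ∃ φ : Module.Dual (ZMod 2) ↥(M.gr (k + 6)), φ ⟨_, htmem⟩ = 1 := by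
    have h1 : (⟨_, htmem⟩ : M.gr (k + 6)) ≠ 0 := by
      simp only [ne_eq, Submodule.mk_eq_zero]; exact hne
    have h2 : ¬ (∀ φ : Module.Dual (ZMod 2) ↥(M.gr (k + 6)), φ ⟨_, htmem⟩ = 0) := by
      rw [Module.forall_dual_apply_eq_zero_iff (ZMod 2)]; exact h1
    push_neg at h2
    obtain ⟨φ, hφ⟩ := h2
    exact ⟨φ, zmod2_eq_one _ hφ⟩
  set f : M.carrier →ₗ[ZMod 2] (ZMod 2) := g0 ∘ₗ M.proj (k + 6) with hfdef
  have hf1 : f (M.sq1 (M.sq2 (M.sq1 (M.sq2 x)))) = 1 := by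
    rw [hfdef]; simp only [LinearMap.coe_comp, Function.comp_apply]
    rw [M.proj_same _ htmem]; exact hg0
  have f_ne : ∀ {d : ℤ} {v : M.carrier}, v ∈ M.gr d → d ≠ k + 6 → f v = 0 := by
    intro d v hv hd
    rw [hfdef]; simp only [LinearMap.coe_comp, Function.comp_apply]
    rw [M.proj_ne _ hd hv]; simp
  have K0 : ∀ j i : Fin 8, f (M.w8 j (M.w8 i x)) = if j = sig8 i then 1 else 0 :=
    M.pairing f hx hf1 f_ne
  have hsiginj : ∀ a b : Fin 8, sig8 a = sig8 b ↔ a = b := by decide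
  have hsigsig : ∀ j : Fin 8, sig8 (sig8 j) = j := by decide
  have Ksum : ∀ (c : Fin 8 → ZMod 2) (j : Fin 8),
      f (M.w8 (sig8 j) (∑ i : Fin 8, c i • M.w8 i x)) = c j := by
    intro c j
    rw [map_sum, map_sum]
    have h1 : ∀ i : Fin 8, f (M.w8 (sig8 j) (c i • M.w8 i x)) = if i = j then c i else 0 := by
      intro i
      rw [map_smul, map_smul, K0, smul_eq_mul]
      rcases eq_or_ne i j with rfl | h
      · rw [if_pos rfl, if_pos rfl, mul_one]
      · rw [if_neg (fun hh => h ((hsiginj j i).mp hh).symm), mul_zero, if_neg h]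
    rw [Finset.sum_congr rfl fun i _ => h1 i, Finset.sum_ite_eq' Finset.univ j c]
    simp
  set P : Submodule (ZMod 2) M.carrier :=
    Submodule.span (ZMod 2) (Set.range fun q : PUnit × Fin 8 => M.w8 q.2 x) with hPdef
  have hx8 : ∀ i : Fin 8, M.w8 i x ∈ P := fun i => Submodule.subset_span ⟨(PUnit.unit, i), rfl⟩
  have hli : LinearIndependent (ZMod 2) (fun q : PUnit × Fin 8 => M.w8 q.2 x) := by
    rw [Fintype.linearIndependent_iff]
    intro c hc q
    obtain ⟨⟨⟩, i⟩ := q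
    have hsum : ∑ i : Fin 8, c (PUnit.unit, i) • M.w8 i x = 0 := by
      rw [Fintype.sum_prod_type] at hc
      simpa using hc
    have h1 := Ksum (fun i => c (PUnit.unit, i)) i
    rw [hsum, map_zero, map_zero] at h1
    exact h1.symm
  set Q : Submodule (ZMod 2) M.carrier := ⨅ j : Fin 8, LinearMap.ker (f ∘ₗ M.w8 j) with hQdef
  have hQmem : ∀ v : M.carrier, v ∈ Q ↔ ∀ j, f (M.w8 j v) = 0 := by
    intro v
    simp [hQdef, Submodule.mem_iInf, LinearMap.mem_ker]
  have hQ1 : ∀ v ∈ Q, M.sq1 v ∈ Q := by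
    intro v hv
    rw [hQmem] at hv ⊢
    intro j
    fin_cases j
    · simpa using hv 1
    · simp [M.sq1_sq1]
    · simpa using hv 4
    · simpa using hv 5
    · simp [M.sq1_sq1]
    · simp [M.sq1_sq1]
    · simpa [M.top1] using hv 7
    · simp [M.top1, M.sq1_sq1]
  have hQ2 : ∀ v ∈ Q, M.sq2 v ∈ Q := by
    intro v hv
    rw [hQmem] at hv ⊢
    intro j
    fin_cases j
    · simpa using hv 2
    · simpa using hv 3
    · simpa [M.sq2_sq2] using hv 5
    · simp [M.sq2_sq2, M.sq1_sq1]
    · simpa using hv 6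
    · simpa using hv 7
    · simp [M.sq2_sq2, M.sq1_sq1]
    · simp [M.sq2_sq2, M.sq1_sq1]
  have hQgr : Q = ⨆ d : ℤ, Q ⊓ M.gr d := by
    apply le_antisymm
    · intro m hm
      have hmT : m ∈ ⨆ d : ℤ, M.gr d := by rw [M.total]; exact Submodule.mem_top
      obtain ⟨c, hc1, hc2⟩ := (Submodule.mem_iSup_iff_exists_finsupp M.gr m).mp hmT
      have hc2' : ∑ d ∈ c.support, c d = m := hc2
      rw [← hc2']
      refine Submodule.sum_mem _ fun d _ => ?_
      refine Submodule.mem_iSup_of_mem d (Submodule.mem_inf.mpr ⟨?_, hc1 d⟩)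
      rw [hQmem]
      intro j
      by_cases hdj : d + deg8 j = k + 6
      · have h0 : f (M.w8 j m) = 0 := (hQmem m).mp hm j
        rw [← hc2', map_sum, map_sum] at h0
        have hsingle : ∑ d' ∈ c.support, f (M.w8 j (c d')) = f (M.w8 j (c d)) := by
          apply Finset.sum_eq_single
          · intro d' _ hne'
            exact f_ne (M.mem_w8 j (hc1 d')) (by omega)
          · intro hnd
            rw [Finsupp.notMem_support_iff.mp hnd]
            simp
        rw [hsingle] at h0
        exact h0
      · exact f_ne (M.mem_w8 j (hc1 d)) hdj
    · exact iSup_le fun d => inf_le_left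
  have hP1 : ∀ v ∈ P, M.sq1 v ∈ P := by
    intro v hv
    have hle : P ≤ Submodule.comap M.sq1 P := by
      rw [hPdef, Submodule.span_le]
      rintro _ ⟨⟨u, i⟩, rfl⟩
      simp only [Submodule.mem_comap, SetLike.mem_coe]
      fin_cases i
      · simpa using hx8 1
      · simp [M.sq1_sq1]
      · simpa using hx8 3
      · simp [M.sq1_sq1]
      · simpa using hx8 5
      · simp [M.sq1_sq1]
      · simpa using hx8 7
      · simp [M.sq1_sq1]
    exact hle hv
  have hP2 : ∀ v ∈ P, M.sq2 v ∈ P := by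
    intro v hv
    have hle : P ≤ Submodule.comap M.sq2 P := by
      rw [hPdef, Submodule.span_le]
      rintro _ ⟨⟨u, i⟩, rfl⟩
      simp only [Submodule.mem_comap, SetLike.mem_coe]
      fin_cases i
      · simpa using hx8 2
      · simpa using hx8 4
      · simpa [M.sq2_sq2] using hx8 5
      · simpa using hx8 6
      · simp [M.sq2_sq2, M.sq1_sq1]
      · simpa [M.top1] using hx8 7
      · simp [M.sq2_sq2, M.sq1_sq1]
      · simp [M.top1, M.sq2_sq2, M.sq1_sq1]
    exact hle hv
  have hPgr : P = ⨆ d : ℤ, P ⊓ M.gr d := by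
    apply le_antisymm
    · rw [hPdef, Submodule.span_le]
      rintro _ ⟨⟨u, i⟩, rfl⟩
      exact Submodule.mem_iSup_of_mem (k + deg8 i)
        (Submodule.mem_inf.mpr ⟨hx8 i, M.mem_w8 i hx⟩)
    · exact iSup_le fun d => inf_le_left
  have hPQ : P ⊓ Q = ⊥ := by
    rw [eq_bot_iff]
    rintro m hmm
    obtain ⟨hmP, hmQ⟩ := Submodule.mem_inf.mp hmm
    obtain ⟨c, hc⟩ := (Submodule.mem_span_range_iff_exists_fun (ZMod 2)).mp hmP
    have hc' : ∑ i : Fin 8, c (PUnit.unit, i) • M.w8 i x = m := by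
      rw [← hc, Fintype.sum_prod_type]
      simp
    have hz : ∀ j, c (PUnit.unit, j) = 0 := by
      intro j
      have h1 := Ksum (fun i => c (PUnit.unit, i)) j
      rw [hc'] at h1
      rw [← h1]
      exact (hQmem m).mp hmQ (sig8 j)
    rw [← hc']
    simp [hz]
  have hPQtop : P ⊔ Q = ⊤ := by
    rw [eq_top_iff]
    intro m _
    have hmpP : (∑ i : Fin 8, f (M.w8 (sig8 i) m) • M.w8 i x) ∈ P :=
      Submodule.sum_mem _ fun i _ => Submodule.smul_mem _ _ (hx8 i)
    have hmpQ : m + ∑ i : Fin 8, f (M.w8 (sig8 i) m) • M.w8 i x ∈ Q := by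
      rw [hQmem]
      intro j
      rw [map_add, map_add, map_sum, map_sum]
      have h1 : ∀ i : Fin 8, f (M.w8 j (f (M.w8 (sig8 i) m) • M.w8 i x))
          = if i = sig8 j then f (M.w8 j m) else 0 := by
        intro i
        rw [map_smul, map_smul, K0 j i, smul_eq_mul]
        rcases eq_or_ne i (sig8 j) with rfl | h
        · rw [if_pos (hsigsig j).symm, if_pos rfl, mul_one, hsigsig]
        · rw [if_neg (fun hh => h (by rw [hh, hsigsig])), mul_zero, if_neg h]
      rw [Finset.sum_congr rfl fun i _ => h1 i,
        Finset.sum_ite_eq' Finset.univ (sig8 j) (fun _ => f (M.w8 j m))]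
      simp [zmod2_add_self]
    have hms : (∑ i : Fin 8, f (M.w8 (sig8 i) m) • M.w8 i x)
        + (m + ∑ i : Fin 8, f (M.w8 (sig8 i) m) • M.w8 i x) = m := by
      rw [add_comm m, ← add_assoc, M.addself, zero_add]
    rw [← hms]
    exact Submodule.add_mem_sup hmpP hmpQ
  have hfree : M.IsFreeOn P := ⟨PUnit, fun _ => k, fun _ => x, fun _ => hx, hli, rfl⟩
  have hsummand : M.IsSummand P := ⟨⟨hP1, hP2, hPgr⟩, Q, ⟨hQ1, hQ2, hQgr⟩, hPQ, hPQtop⟩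
  have hP0 := hred P hsummand hfree
  have hxP : x ∈ P := by simpa using hx8 0
  rw [hP0, Submodule.mem_bot] at hxP
  rw [hxP] at hne
  simp at hne

/-! ### Consequences: `Sq¹` vanishes on degree `0`, and injectivity statements -/

lemma endgame (hloc : M.Q0Local) (hconn : ∀ k : ℤ, k < 0 → M.gr k = ⊥) {s : M.carrier}
    (hs : s ∈ M.gr 0) (h12 : M.sq1 (M.sq2 s) = 0) : M.sq1 s = 0 := by
  have hd3 : M.sq2 (M.sq1 s) ∈ M.gr 3 :=
    M.gr_cast (by norm_num) (M.sq2_gr _ _ (M.sq1_gr _ _ hs))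
  have hdq : M.Q1 (M.sq2 (M.sq1 s)) = 0 := by
    rw [M.q1_apply, M.z1, M.top1, h12]
    simp
  obtain ⟨r, hr, hrq⟩ := M.loc_ex hloc hd3 hdq
  have hr0 : r ∈ M.gr 0 := M.gr_cast (by norm_num) hr
  have E1 : M.sq1 (M.sq2 r) + M.sq2 (M.sq1 r) = M.sq2 (M.sq1 s) := by
    rw [← M.q1_apply]; exact hrq
  have E2 : M.sq2 (M.sq1 (M.sq2 r)) = 0 := by
    have h := congrArg M.sq2 E1
    rw [map_add, M.sq2_sq2 (M.sq1 r), M.sq2_sq2 (M.sq1 s), M.sq1_sq1, M.sq1_sq1] at h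
    simpa using h
  have hq2r : M.Q1 (M.sq2 r) = 0 := by
    rw [M.q1_apply, E2, M.sq2_sq2 r, M.sq1_sq1]
    simp
  have h2r : M.sq2 r = 0 :=
    M.loc_low hloc hconn (M.gr_cast (show (0:ℤ)+2 = 2 by norm_num) (M.sq2_gr _ _ hr0)) (by norm_num) hq2r
  have E3 : M.sq2 (M.sq1 r) = M.sq2 (M.sq1 s) := by
    rw [h2r] at E1
    simpa using E1
  have hss : M.sq2 (M.sq2 s) = 0 := by
    have h := congrArg M.sq1 E3
    rw [← M.sq2_sq2 r, ← M.sq2_sq2 s, h2r] at h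
    simpa using h.symm
  have hq1s : M.Q1 (M.sq1 s) = 0 := by
    rw [M.q1_apply, ← M.sq2_sq2 s, hss, M.sq1_sq1]
    simp
  exact M.loc_low hloc hconn (M.gr_cast (show (0:ℤ)+1 = 1 by norm_num) (M.sq1_gr _ _ hs)) (by norm_num) hq1s

lemma sq1_zero (hred : M.Reduced) (hloc : M.Q0Local) (hconn : ∀ k : ℤ, k < 0 → M.gr k = ⊥)
    {x : M.carrier} (hx : x ∈ M.gr 0) : M.sq1 x = 0 := by
  have hθ : M.sq1 (M.sq2 (M.sq1 (M.sq2 x))) = 0 := M.theta_zero hred hx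
  have he3 : M.sq2 (M.sq1 x) ∈ M.gr 3 :=
    M.gr_cast (by norm_num) (M.sq2_gr _ _ (M.sq1_gr _ _ hx))
  have heq : M.Q1 (M.sq2 (M.sq1 x)) = 0 := by
    rw [M.q1_apply, M.z1, M.top1, hθ]
    simp
  obtain ⟨s, hs', hsq⟩ := M.loc_ex hloc he3 heq
  have hs : s ∈ M.gr 0 := M.gr_cast (by norm_num) hs'
  have F1 : M.sq1 (M.sq2 s) + M.sq2 (M.sq1 s) = M.sq2 (M.sq1 x) := by
    rw [← M.q1_apply]; exact hsq
  have F2 : M.sq2 (M.sq2 s) = M.sq2 (M.sq2 x) := by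
    have h := congrArg M.sq1 F1
    rw [map_add, M.sq1_sq1, ← M.sq2_sq2 s, ← M.sq2_sq2 x] at h
    simpa using h
  have hv1 : M.sq1 x + M.sq1 s ∈ M.gr 1 :=
    Submodule.add_mem _ (M.gr_cast (by norm_num) (M.sq1_gr _ _ hx))
      (M.gr_cast (by norm_num) (M.sq1_gr _ _ hs))
  have hv0 : M.Q1 (M.sq1 x + M.sq1 s) = 0 := by
    rw [map_add, M.q1_apply, M.q1_apply, M.sq1_sq1, M.sq1_sq1,
      ← M.sq2_sq2 x, ← M.sq2_sq2 s, F2]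
    simp [M.addself]
  have hsx : M.sq1 x = M.sq1 s :=
    M.eq_of_addzero (M.loc_low hloc hconn hv1 (by norm_num) hv0)
  have F3 : M.sq1 (M.sq2 s) = 0 := by
    rw [hsx] at F1
    have h0 : M.sq1 (M.sq2 s) + M.sq2 (M.sq1 s) = 0 + M.sq2 (M.sq1 s) := by
      rw [zero_add]; exact F1
    exact add_right_cancel h0
  rw [hsx]
  exact M.endgame hloc hconn hs F3

lemma inj2 (hred : M.Reduced) (hloc : M.Q0Local) (hconn : ∀ k : ℤ, k < 0 → M.gr k = ⊥)
    {x : M.carrier} (hx : x ∈ M.gr 0) (h : M.sq2 x = 0) : x = 0 := by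
  apply M.loc_low hloc hconn hx (by norm_num)
  rw [M.q1_apply, h, M.sq1_zero hred hloc hconn hx]
  simp

lemma inj3 (hred : M.Reduced) (hloc : M.Q0Local) (hconn : ∀ k : ℤ, k < 0 → M.gr k = ⊥)
    {x : M.carrier} (hx : x ∈ M.gr 0) (h : M.sq1 (M.sq2 x) = 0) : x = 0 := by
  apply M.loc_low hloc hconn hx (by norm_num)
  rw [M.q1_apply, h, M.sq1_zero hred hloc hconn hx]
  simp

lemma inj4 (hred : M.Reduced) (hloc : M.Q0Local) (hconn : ∀ k : ℤ, k < 0 → M.gr k = ⊥)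
    {x : M.carrier} (hx : x ∈ M.gr 0) (h : M.sq2 (M.sq1 (M.sq2 x)) = 0) : x = 0 := by
  apply M.inj2 hred hloc hconn hx
  apply M.loc_low hloc hconn (M.gr_cast (show (0:ℤ)+2 = 2 by norm_num) (M.sq2_gr _ _ hx)) (by norm_num)
  rw [M.q1_apply, h, M.sq2_sq2 x, M.sq1_sq1]
  simp

lemma split4 {a b c d : M.carrier} (ha : a ∈ M.gr 0) (hb : b ∈ M.gr 2) (hc : c ∈ M.gr 3)
    (hd : d ∈ M.gr 5) (h : a + b + c + d = 0) : a = 0 ∧ b = 0 ∧ c = 0 ∧ d = 0 := by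
  refine ⟨?_, ?_, ?_, ?_⟩
  · have h0 := congrArg (M.proj 0) h
    rw [map_add, map_add, map_add, map_zero, M.proj_same 0 ha,
      M.proj_ne 0 (by norm_num) hb, M.proj_ne 0 (by norm_num) hc,
      M.proj_ne 0 (by norm_num) hd, add_zero, add_zero, add_zero] at h0
    exact (Submodule.mk_eq_zero _ _).mp h0
  · have h0 := congrArg (M.proj 2) h
    rw [map_add, map_add, map_add, map_zero, M.proj_same 2 hb,
      M.proj_ne 2 (by norm_num) ha, M.proj_ne 2 (by norm_num) hc,
      M.proj_ne 2 (by norm_num) hd, zero_add, add_zero, add_zero] at h0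
    exact (Submodule.mk_eq_zero _ _).mp h0
  · have h0 := congrArg (M.proj 3) h
    rw [map_add, map_add, map_add, map_zero, M.proj_same 3 hc,
      M.proj_ne 3 (by norm_num) ha, M.proj_ne 3 (by norm_num) hb,
      M.proj_ne 3 (by norm_num) hd, zero_add, zero_add, add_zero] at h0
    exact (Submodule.mk_eq_zero _ _).mp h0
  · have h0 := congrArg (M.proj 5) h
    rw [map_add, map_add, map_add, map_zero, M.proj_same 5 hd,
      M.proj_ne 5 (by norm_num) ha, M.proj_ne 5 (by norm_num) hb,
      M.proj_ne 5 (by norm_num) hc, zero_add, zero_add, zero_add] at h0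
    exact (Submodule.mk_eq_zero _ _).mp h0

end A1Module

/-- Lemma 3.10: if `M` is a reduced, finite, `Q₀`-local `A(1)`-module, vanishing in negative
degrees, and `b : B → M` is an `𝔽₂`-basis of `M₀`, then the `A(1)`-map `⊕_{b ∈ B} Υ₁{y_b} → M`
sending `y_b ↦ b` is injective with image `M⁰`; i.e. the elements `Sqᴿ (b i)` for
`Sqᴿ ∈ {1, Sq², Sq¹Sq², Sq²Sq¹Sq²}` are linearly independent and span `M⁰`. -/
theorem lem_base_case (M : A1Module) (hred : M.Reduced) (hfin : M.FiniteModule)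
    (hloc : M.Q0Local) (hconn : ∀ k : ℤ, k < 0 → M.gr k = ⊥)
    (B : Type) (b : B → M.carrier) (hb0 : ∀ i, b i ∈ M.gr 0)
    (hbli : LinearIndependent (ZMod 2) b)
    (hbsp : Submodule.span (ZMod 2) (Set.range b) = M.gr 0) :
    LinearIndependent (ZMod 2) (fun q : B × Fin 4 => M.w4 q.2 (b q.1)) ∧
    Submodule.span (ZMod 2) (Set.range fun q : B × Fin 4 => M.w4 q.2 (b q.1)) =
      M.below 0 := by

  classical
  have hsq1b : ∀ v ∈ M.gr 0, M.sq1 v = 0 := fun v hv => M.sq1_zero hred hloc hconn hv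
  have hinj : ∀ (j : Fin 4) (v : M.carrier), v ∈ M.gr 0 → M.w4 j v = 0 → v = 0 := by
    intro j v hv h
    fin_cases j
    · simpa using h
    · exact M.inj2 hred hloc hconn hv (by simpa using h)
    · exact M.inj3 hred hloc hconn hv (by simpa using h)
    · exact M.inj4 hred hloc hconn hv (by simpa using h)
  constructor
  · rw [linearIndependent_iff']
    intro s g hsum q hqs
    set z : Fin 4 → M.carrier :=
      fun j => ∑ q ∈ s.filter (fun q => q.2 = j), g q • b q.1 with hzdef
    have hzmem : ∀ j, z j ∈ M.gr 0 := fun j =>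
      Submodule.sum_mem _ fun q _ => Submodule.smul_mem _ _ (hb0 q.1)
    have hzsum : ∀ j : Fin 4,
        M.w4 j (z j) = ∑ q ∈ s.filter (fun q => q.2 = j), g q • M.w4 q.2 (b q.1) := by
      intro j
      rw [hzdef, map_sum]
      refine Finset.sum_congr rfl fun q hq => ?_
      rw [map_smul, (Finset.mem_filter.mp hq).2]
    have htot : M.w4 0 (z 0) + M.w4 1 (z 1) + M.w4 2 (z 2) + M.w4 3 (z 3) = 0 := by
      have h4 : ∑ j : Fin 4, M.w4 j (z j) = 0 := by
        calc ∑ j : Fin 4, M.w4 j (z j)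
            = ∑ j : Fin 4, ∑ q ∈ s.filter (fun q => q.2 = j), g q • M.w4 q.2 (b q.1) :=
              Finset.sum_congr rfl fun j _ => hzsum j
          _ = ∑ q ∈ s, g q • M.w4 q.2 (b q.1) := Finset.sum_fiberwise s (fun q => q.2) _
          _ = 0 := hsum
      simpa [Fin.sum_univ_four] using h4
    have hmem0 : M.w4 0 (z 0) ∈ M.gr 0 := by simpa using hzmem 0
    have hmem2 : M.w4 1 (z 1) ∈ M.gr 2 := by
      have h := M.sq2_gr _ _ (hzmem 1)
      simpa using M.gr_cast (by norm_num : (0:ℤ) + 2 = 2) h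
    have hmem3 : M.w4 2 (z 2) ∈ M.gr 3 := by
      have h := M.sq1_gr _ _ (M.sq2_gr _ _ (hzmem 2))
      simpa using M.gr_cast (by norm_num : (0:ℤ) + 2 + 1 = 3) h
    have hmem4 : M.w4 3 (z 3) ∈ M.gr 5 := by
      have h := M.sq2_gr _ _ (M.sq1_gr _ _ (M.sq2_gr _ _ (hzmem 3)))
      simpa using M.gr_cast (by norm_num : (0:ℤ) + 2 + 1 + 2 = 5) h
    obtain ⟨h0, h2, h3, h4⟩ := M.split4 hmem0 hmem2 hmem3 hmem4 htot
    have hz0 : ∀ j : Fin 4, z j = 0 := by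
      intro j
      fin_cases j
      · exact hinj 0 _ (hzmem 0) h0
      · exact hinj 1 _ (hzmem 1) h2
      · exact hinj 2 _ (hzmem 2) h3
      · exact hinj 3 _ (hzmem 3) h4
    have hq2 : q ∈ s.filter (fun q' => q'.2 = q.2) := Finset.mem_filter.mpr ⟨hqs, rfl⟩
    have himg : ∑ i ∈ (s.filter (fun q' => q'.2 = q.2)).image Prod.fst,
        g (i, q.2) • b i = 0 := by
      rw [Finset.sum_image (fun a ha a' ha' hfst => ?_)]
      · have heq : ∀ q' ∈ s.filter (fun q' => q'.2 = q.2),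
            g (q'.1, q.2) • b q'.1 = g q' • b q'.1 := by
          intro q' hq'
          rw [← (Finset.mem_filter.mp hq').2, Prod.mk.eta]
        rw [Finset.sum_congr rfl heq]
        exact hz0 q.2 ▸ rfl
      · have h1 := (Finset.mem_filter.mp ha).2
        have h2 := (Finset.mem_filter.mp ha').2
        exact Prod.ext hfst (by rw [h1, h2])
    have hfin := linearIndependent_iff'.mp hbli _ (fun i => g (i, q.2)) himg q.1
      (Finset.mem_image_of_mem _ hq2)
    simpa using hfin
  · apply le_antisymm
    · refine le_sInf fun p hp => ?_
      obtain ⟨hp1, hp2, hplow⟩ := hp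
      rw [Submodule.span_le]
      rintro _ ⟨⟨i, j⟩, rfl⟩
      have hbp : b i ∈ p := hplow 0 le_rfl (hb0 i)
      fin_cases j
      · simpa using hbp
      · simpa using hp2 _ hbp
      · simpa using hp1 _ (hp2 _ hbp)
      · simpa using hp2 _ (hp1 _ (hp2 _ hbp))
    · refine sInf_le ⟨?_, ?_, ?_⟩
      · intro v hv
        have hle : Submodule.span (ZMod 2) (Set.range fun q : B × Fin 4 => M.w4 q.2 (b q.1))
            ≤ Submodule.comap M.sq1
              (Submodule.span (ZMod 2) (Set.range fun q : B × Fin 4 => M.w4 q.2 (b q.1))) := by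
          rw [Submodule.span_le]
          rintro _ ⟨⟨i, j⟩, rfl⟩
          simp only [Submodule.mem_comap, SetLike.mem_coe]
          fin_cases j
          · simp [hsq1b (b i) (hb0 i)]
          · simpa using Submodule.subset_span (s := Set.range fun q : B × Fin 4 => M.w4 q.2 (b q.1)) ⟨(i, 2), rfl⟩
          · simp [M.sq1_sq1]
          · simp [M.theta_zero hred (hb0 i)]
        exact hle hv
      · intro v hv
        have hle : Submodule.span (ZMod 2) (Set.range fun q : B × Fin 4 => M.w4 q.2 (b q.1))
            ≤ Submodule.comap M.sq2
              (Submodule.span (ZMod 2) (Set.range fun q : B × Fin 4 => M.w4 q.2 (b q.1))) := by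
          rw [Submodule.span_le]
          rintro _ ⟨⟨i, j⟩, rfl⟩
          simp only [Submodule.mem_comap, SetLike.mem_coe]
          fin_cases j
          · simpa using Submodule.subset_span (s := Set.range fun q : B × Fin 4 => M.w4 q.2 (b q.1)) ⟨(i, 1), rfl⟩
          · simp [M.sq2_sq2, hsq1b (b i) (hb0 i)]
          · simpa using Submodule.subset_span (s := Set.range fun q : B × Fin 4 => M.w4 q.2 (b q.1)) ⟨(i, 3), rfl⟩
          · simp [M.sq2_sq2, M.sq1_sq1]
        exact hle hv
      · intro j hj
        rcases lt_or_eq_of_le hj with h | h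
        · rw [hconn j h]
          exact bot_le
        · subst h
          rw [← hbsp, Submodule.span_le]
          rintro _ ⟨i, rfl⟩
          simpa using Submodule.subset_span (s := Set.range fun q : B × Fin 4 => M.w4 q.2 (b q.1))
            ⟨(i, 0), rfl⟩
end
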